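/- arXiv:1701.04399 — 4 statements merged into one kernel-verified Lean document; each statement's English description precedes it below -/
import Mathlib

section
/- Let m, n be even positive integers and let I be a subset of the corner set C(m,n,2) = ([m]×[n]) ∩ (2ℕ₀+1)². For (i,j) ∈ I define ρ_j(i) = |([i]×{j}) ∩ I| and σ_i(j) = |({i}×[j]) ∩ I|. Suppose row sums r_j, r_{j+1} and column sums c_i, c_{i+1} (for j ∈ Π_y(I), i ∈ Π_x(I)) are given nonnegative integers. Then there exists a 0/1-assignment ξ on G(I) = ⋃_{(i,j)∈I} ((i,j)+{0,1}²) satisfying all these row and column sums and having exactly one 1 in each block B(i,j) = (i,j)+{0,1}², (i,j) ∈ I, if and only if for every (i,j) ∈ I we have r_j + r_{j+1} = ρ_j(m) and c_i + c_{i+1} = σ_i(n). -/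
open Finset

/-- Corner set `C(m,n,2)`: points of `[m]×[n]` with both coordinates odd. -/
def cornerSet (m n : ℕ) : Finset (ℕ × ℕ) :=
  ((Finset.Icc 1 m) ×ˢ (Finset.Icc 1 n)).filter (fun p => p.1 % 2 = 1 ∧ p.2 % 2 = 1)

/-- The 2×2 block with lower-left corner `(i,j)`. -/
def block2 (i j : ℕ) : Finset (ℕ × ℕ) :=
  {(i, j), (i + 1, j), (i, j + 1), (i + 1, j + 1)}

/-- `G(I)`: union of the blocks with corners in `I`. -/
def gridG (I : Finset (ℕ × ℕ)) : Finset (ℕ × ℕ) :=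
  I.biUnion (fun p => block2 p.1 p.2)

/-- `ρ_j(i) = |([i]×{j}) ∩ I|`. -/
def rhoI (I : Finset (ℕ × ℕ)) (j i : ℕ) : ℕ :=
  (I.filter (fun p => p.1 ≤ i ∧ p.2 = j)).card

/-- `σ_i(j) = |({i}×[j]) ∩ I|`. -/
def sigmaI (I : Finset (ℕ × ℕ)) (i j : ℕ) : ℕ :=
  (I.filter (fun p => p.1 = i ∧ p.2 ≤ j)).card

/-- Projection of `I` onto the second coordinate. -/
def PiY (I : Finset (ℕ × ℕ)) : Finset ℕ := I.image Prod.snd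

/-- Projection of `I` onto the first coordinate. -/
def PiX (I : Finset (ℕ × ℕ)) : Finset ℕ := I.image Prod.fst

/-- A solution of the single-graylevel problem `DR(ν)` on `G(I)`:
a 0/1-assignment with prescribed row and column sums and exactly `ν` ones per block. -/
def IsDRSol (I : Finset (ℕ × ℕ)) (r c : ℕ → ℕ) (ν : ℕ) (ξ : ℕ × ℕ → ℕ) : Prop :=
  (∀ p ∈ gridG I, ξ p ≤ 1) ∧
  (∀ j ∈ PiY I, ∀ l ∈ ({0, 1} : Finset ℕ),
    ∑ p ∈ (gridG I).filter (fun q => q.2 = j + l), ξ p = r (j + l)) ∧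
  (∀ i ∈ PiX I, ∀ l ∈ ({0, 1} : Finset ℕ),
    ∑ p ∈ (gridG I).filter (fun q => q.1 = i + l), ξ p = c (i + l)) ∧
  (∀ p ∈ I, ∑ q ∈ block2 p.1 p.2, ξ q = ν)

lemma mem_block2 {q : ℕ × ℕ} {i j : ℕ} :
    q ∈ block2 i j ↔ (q.1 = i ∨ q.1 = i + 1) ∧ (q.2 = j ∨ q.2 = j + 1) := by
  obtain ⟨a, b⟩ := q
  simp only [block2, mem_insert, mem_singleton, Prod.mk.injEq]
  tauto

lemma oddCoords {m n : ℕ} {I : Finset (ℕ × ℕ)} (hI : I ⊆ cornerSet m n)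
    {p : ℕ × ℕ} (hp : p ∈ I) :
    p.1 % 2 = 1 ∧ p.2 % 2 = 1 ∧ 1 ≤ p.1 ∧ p.1 ≤ m ∧ 1 ≤ p.2 ∧ p.2 ≤ n := by
  have := hI hp
  simp only [cornerSet, mem_filter, mem_product, mem_Icc] at this
  tauto

lemma blocks_disjoint {m n : ℕ} {I : Finset (ℕ × ℕ)} (hI : I ⊆ cornerSet m n)
    {p p' : ℕ × ℕ} (hp : p ∈ I) (hp' : p' ∈ I) (hne : p ≠ p') :
    Disjoint (block2 p.1 p.2) (block2 p'.1 p'.2) := by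
  rw [Finset.disjoint_left]
  intro q hq hq'
  rw [mem_block2] at hq hq'
  have h1 := oddCoords hI hp
  have h2 := oddCoords hI hp'
  exact hne (Prod.ext_iff.mpr ⟨by omega, by omega⟩)

lemma rank_card (T : Finset ℕ) (t : ℕ) :
    (T.filter (fun x => (T.filter (· ≤ x)).card ≤ t)).card = min t T.card := by
  set g : ℕ → ℕ := fun x => (T.filter (· ≤ x)).card with hg
  have key : ∀ x ∈ T, ∀ y ∈ T, x < y → g x < g y := by
    intro x hx y hy hxy
    refine Finset.card_lt_card ((Finset.ssubset_iff_of_subset ?_).mpr ⟨y, ?_, ?_⟩)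
    · intro a ha
      simp only [mem_filter] at ha ⊢
      exact ⟨ha.1, by omega⟩
    · simp [mem_filter, hy]
    · simp only [mem_filter]
      omega
  have hginj : Set.InjOn g T := by
    intro x hx y hy hxy
    by_contra hne
    rcases Nat.lt_or_ge x y with h | h
    · exact absurd hxy (Nat.ne_of_lt (key x hx y hy h))
    · have : y < x := by omega
      exact absurd hxy.symm (Nat.ne_of_lt (key y hy x hx this))
  have hmemIcc : ∀ x ∈ T, g x ∈ Icc 1 T.card := by
    intro x hx
    refine mem_Icc.mpr ⟨Finset.card_pos.mpr ⟨x, mem_filter.mpr ⟨hx, le_rfl⟩⟩,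
      Finset.card_le_card (filter_subset _ _)⟩
  have himg : T.image g = Icc 1 T.card := by
    apply Finset.eq_of_subset_of_card_le
    · intro y hy
      obtain ⟨x, hx, rfl⟩ := mem_image.mp hy
      exact hmemIcc x hx
    · rw [Nat.card_Icc, Finset.card_image_of_injOn hginj]
      omega
  have h2 : ((T.filter (fun x => g x ≤ t)).image g).card
      = ((Icc 1 T.card).filter (· ≤ t)).card := by
    rw [← himg, Finset.filter_image]
  rw [← Finset.card_image_of_injOn (hginj.mono (filter_subset _ _)), h2]
  have : (Icc 1 T.card).filter (· ≤ t) = Icc 1 (min t T.card) := by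
    ext x
    simp only [mem_filter, mem_Icc]
    omega
  rw [this, Nat.card_Icc]
  omega

lemma row_count (I : Finset (ℕ × ℕ)) (j t : ℕ) :
    (I.filter (fun p => p.2 = j ∧ rhoI I j p.1 ≤ t)).card
      = min t (I.filter (fun p => p.2 = j)).card := by
  set S := I.filter (fun p => p.2 = j) with hS
  set T := S.image Prod.fst with hT
  have hfinj : Set.InjOn (Prod.fst : ℕ × ℕ → ℕ) ↑S := by
    intro p hp q hq h
    simp only [hS, mem_coe, mem_filter] at hp hq
    exact Prod.ext_iff.mpr ⟨h, hp.2.trans hq.2.symm⟩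
  have hcard : T.card = S.card := Finset.card_image_of_injOn hfinj
  have hrho : ∀ x, rhoI I j x = (T.filter (· ≤ x)).card := by
    intro x
    have h1 : I.filter (fun p => p.1 ≤ x ∧ p.2 = j) = S.filter (fun p => p.1 ≤ x) := by
      rw [hS, Finset.filter_filter]
      apply Finset.filter_congr
      intro q _
      tauto
    have h2 : T.filter (· ≤ x) = (S.filter (fun p => p.1 ≤ x)).image Prod.fst := by
      rw [hT, Finset.filter_image]
    rw [rhoI, h1, h2, Finset.card_image_of_injOn (hfinj.mono (filter_subset _ _))]
  have hmain : I.filter (fun p => p.2 = j ∧ rhoI I j p.1 ≤ t)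
      = S.filter (fun p => (T.filter (· ≤ p.1)).card ≤ t) := by
    rw [hS, Finset.filter_filter]
    apply Finset.filter_congr
    intro q _
    rw [← hrho]
  have himg : (S.filter (fun p => (T.filter (· ≤ p.1)).card ≤ t)).image Prod.fst
      = T.filter (fun x => (T.filter (· ≤ x)).card ≤ t) := by
    rw [hT, Finset.filter_image]
  rw [hmain, ← hcard, ← rank_card T t, ← himg,
    Finset.card_image_of_injOn (hfinj.mono (filter_subset _ _))]

lemma col_count (I : Finset (ℕ × ℕ)) (i t : ℕ) :
    (I.filter (fun p => p.1 = i ∧ sigmaI I i p.2 ≤ t)).card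
      = min t (I.filter (fun p => p.1 = i)).card := by
  set S := I.filter (fun p => p.1 = i) with hS
  set T := S.image Prod.snd with hT
  have hfinj : Set.InjOn (Prod.snd : ℕ × ℕ → ℕ) ↑S := by
    intro p hp q hq h
    simp only [hS, mem_coe, mem_filter] at hp hq
    exact Prod.ext_iff.mpr ⟨hp.2.trans hq.2.symm, h⟩
  have hcard : T.card = S.card := Finset.card_image_of_injOn hfinj
  have hsig : ∀ x, sigmaI I i x = (T.filter (· ≤ x)).card := by
    intro x
    have h1 : I.filter (fun p => p.1 = i ∧ p.2 ≤ x) = S.filter (fun p => p.2 ≤ x) := by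
      rw [hS, Finset.filter_filter]
    have h2 : T.filter (· ≤ x) = (S.filter (fun p => p.2 ≤ x)).image Prod.snd := by
      rw [hT, Finset.filter_image]
    rw [sigmaI, h1, h2, Finset.card_image_of_injOn (hfinj.mono (filter_subset _ _))]
  have hmain : I.filter (fun p => p.1 = i ∧ sigmaI I i p.2 ≤ t)
      = S.filter (fun p => (T.filter (· ≤ p.2)).card ≤ t) := by
    rw [hS, Finset.filter_filter]
    apply Finset.filter_congr
    intro q _
    rw [← hsig]
  have himg : (S.filter (fun p => (T.filter (· ≤ p.2)).card ≤ t)).image Prod.snd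
      = T.filter (fun x => (T.filter (· ≤ x)).card ≤ t) := by
    rw [hT, Finset.filter_image]
  rw [hmain, ← hcard, ← rank_card T t, ← himg,
    Finset.card_image_of_injOn (hfinj.mono (filter_subset _ _))]

lemma rho_top {m n : ℕ} {I : Finset (ℕ × ℕ)} (hI : I ⊆ cornerSet m n) (j : ℕ) :
    rhoI I j m = (I.filter (fun q => q.2 = j)).card := by
  unfold rhoI
  congr 1
  apply Finset.filter_congr
  intro x hx
  exact ⟨fun h => h.2, fun h => ⟨(oddCoords hI hx).2.2.2.1, h⟩⟩

lemma sigma_top {m n : ℕ} {I : Finset (ℕ × ℕ)} (hI : I ⊆ cornerSet m n) (i : ℕ) :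
    sigmaI I i n = (I.filter (fun q => q.1 = i)).card := by
  unfold sigmaI
  congr 1
  apply Finset.filter_congr
  intro x hx
  exact ⟨fun h => h.1, fun h => ⟨h, (oddCoords hI hx).2.2.2.2.2⟩⟩

lemma sum_grid_filter {m n : ℕ} {I : Finset (ℕ × ℕ)} (hI : I ⊆ cornerSet m n)
    (pred : ℕ × ℕ → Prop) [DecidablePred pred] (ξ : ℕ × ℕ → ℕ) :
    ∑ q ∈ (gridG I).filter pred, ξ q
      = ∑ p ∈ I, ∑ q ∈ (block2 p.1 p.2).filter pred, ξ q := by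
  rw [gridG, Finset.filter_biUnion]
  exact Finset.sum_biUnion (fun a ha b hb hab =>
    (blocks_disjoint hI ha hb hab).mono (filter_subset _ _) (filter_subset _ _))

def IsDRSol' (I : Finset (ℕ × ℕ)) (r c : ℕ → ℕ) (ν : ℕ) (ξ : ℕ × ℕ → ℕ) : Prop :=
  (∀ p ∈ gridG I, ξ p ≤ 1) ∧
  (∀ j ∈ I.image Prod.snd, ∀ l ∈ ({0, 1} : Finset ℕ),
    ∑ p ∈ (gridG I).filter (fun q => q.2 = j + l), ξ p = r (j + l)) ∧
  (∀ i ∈ I.image Prod.fst, ∀ l ∈ ({0, 1} : Finset ℕ),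
    ∑ p ∈ (gridG I).filter (fun q => q.1 = i + l), ξ p = c (i + l)) ∧
  (∀ p ∈ I, ∑ q ∈ block2 p.1 p.2, ξ q = ν)

lemma forward_row {m n : ℕ} {I : Finset (ℕ × ℕ)} (hI : I ⊆ cornerSet m n)
    {r c : ℕ → ℕ} {ξ : ℕ × ℕ → ℕ} (hξ : IsDRSol' I r c 1 ξ) {p : ℕ × ℕ} (hp : p ∈ I) :
    r p.2 + r (p.2 + 1) = rhoI I p.2 m := by
  obtain ⟨hle, hrow, hcol, hblk⟩ := hξ
  set j := p.2 with hj
  have hjodd : j % 2 = 1 := (oddCoords hI hp).2.1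
  have hjY : j ∈ I.image Prod.snd := mem_image.mpr ⟨p, hp, rfl⟩
  have h0 := hrow j hjY 0 (by simp)
  have h1 := hrow j hjY 1 (by simp)
  have hcomb : r (j + 0) + r (j + 1)
      = ∑ p' ∈ I, ((∑ q ∈ (block2 p'.1 p'.2).filter (fun q => q.2 = j + 0), ξ q)
        + (∑ q ∈ (block2 p'.1 p'.2).filter (fun q => q.2 = j + 1), ξ q)) := by
    rw [← h0, ← h1, sum_grid_filter hI _ ξ, sum_grid_filter hI _ ξ, ← Finset.sum_add_distrib]
  have hterm : ∀ p' ∈ I,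
      ((∑ q ∈ (block2 p'.1 p'.2).filter (fun q => q.2 = j + 0), ξ q)
        + (∑ q ∈ (block2 p'.1 p'.2).filter (fun q => q.2 = j + 1), ξ q))
      = if p'.2 = j then 1 else 0 := by
    intro p' hp'
    have hodd' := (oddCoords hI hp').2.1
    by_cases hpj : p'.2 = j
    · rw [if_pos hpj]
      have heq : (block2 p'.1 p'.2).filter (fun q => q.2 = j + 1)
          = (block2 p'.1 p'.2).filter (fun q => ¬ q.2 = j + 0) := by
        apply Finset.filter_congr
        intro q hq
        have hq2 := (mem_block2.mp hq).2
        constructor <;> intro h <;> omega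
      rw [heq, Finset.sum_filter_add_sum_filter_not]
      exact hblk p' hp'
    · rw [if_neg hpj]
      have f0 : (block2 p'.1 p'.2).filter (fun q => q.2 = j + 0) = ∅ := by
        apply Finset.filter_false_of_mem
        intro q hq
        have hq2 := (mem_block2.mp hq).2
        omega
      have f1 : (block2 p'.1 p'.2).filter (fun q => q.2 = j + 1) = ∅ := by
        apply Finset.filter_false_of_mem
        intro q hq
        have hq2 := (mem_block2.mp hq).2
        omega
      rw [f0, f1]
      simp
  rw [Finset.sum_congr rfl hterm] at hcomb
  rw [rho_top hI]
  have : r (j + 0) = r j := by norm_num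
  rw [this] at hcomb
  rw [hcomb, ← Finset.card_filter]

lemma forward_col {m n : ℕ} {I : Finset (ℕ × ℕ)} (hI : I ⊆ cornerSet m n)
    {r c : ℕ → ℕ} {ξ : ℕ × ℕ → ℕ} (hξ : IsDRSol' I r c 1 ξ) {p : ℕ × ℕ} (hp : p ∈ I) :
    c p.1 + c (p.1 + 1) = sigmaI I p.1 n := by
  obtain ⟨hle, hrow, hcol, hblk⟩ := hξ
  set i := p.1 with hi
  have hiodd : i % 2 = 1 := (oddCoords hI hp).1
  have hiX : i ∈ I.image Prod.fst := mem_image.mpr ⟨p, hp, rfl⟩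
  have h0 := hcol i hiX 0 (by simp)
  have h1 := hcol i hiX 1 (by simp)
  have hcomb : c (i + 0) + c (i + 1)
      = ∑ p' ∈ I, ((∑ q ∈ (block2 p'.1 p'.2).filter (fun q => q.1 = i + 0), ξ q)
        + (∑ q ∈ (block2 p'.1 p'.2).filter (fun q => q.1 = i + 1), ξ q)) := by
    rw [← h0, ← h1, sum_grid_filter hI _ ξ, sum_grid_filter hI _ ξ, ← Finset.sum_add_distrib]
  have hterm : ∀ p' ∈ I,
      ((∑ q ∈ (block2 p'.1 p'.2).filter (fun q => q.1 = i + 0), ξ q)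
        + (∑ q ∈ (block2 p'.1 p'.2).filter (fun q => q.1 = i + 1), ξ q))
      = if p'.1 = i then 1 else 0 := by
    intro p' hp'
    have hodd' := (oddCoords hI hp').1
    by_cases hpi : p'.1 = i
    · rw [if_pos hpi]
      have heq : (block2 p'.1 p'.2).filter (fun q => q.1 = i + 1)
          = (block2 p'.1 p'.2).filter (fun q => ¬ q.1 = i + 0) := by
        apply Finset.filter_congr
        intro q hq
        have hq1 := (mem_block2.mp hq).1
        constructor <;> intro h <;> omega
      rw [heq, Finset.sum_filter_add_sum_filter_not]
      exact hblk p' hp'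
    · rw [if_neg hpi]
      have f0 : (block2 p'.1 p'.2).filter (fun q => q.1 = i + 0) = ∅ := by
        apply Finset.filter_false_of_mem
        intro q hq
        have hq1 := (mem_block2.mp hq).1
        omega
      have f1 : (block2 p'.1 p'.2).filter (fun q => q.1 = i + 1) = ∅ := by
        apply Finset.filter_false_of_mem
        intro q hq
        have hq1 := (mem_block2.mp hq).1
        omega
      rw [f0, f1]
      simp
  rw [Finset.sum_congr rfl hterm] at hcomb
  rw [sigma_top hI]
  have : c (i + 0) = c i := by norm_num
  rw [this] at hcomb
  rw [hcomb, ← Finset.card_filter]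

lemma backward {m n : ℕ} {I : Finset (ℕ × ℕ)} (hI : I ⊆ cornerSet m n) {r c : ℕ → ℕ}
    (h : ∀ p ∈ I, r p.2 + r (p.2 + 1) = rhoI I p.2 m ∧ c p.1 + c (p.1 + 1) = sigmaI I p.1 n) :
    ∃ ξ : ℕ × ℕ → ℕ, IsDRSol' I r c 1 ξ := by
  classical
  set F : ℕ × ℕ → ℕ × ℕ := fun p =>
    (if sigmaI I p.1 p.2 ≤ c p.1 then p.1 else p.1 + 1,
     if rhoI I p.2 p.1 ≤ r p.2 then p.2 else p.2 + 1) with hF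
  set ξ : ℕ × ℕ → ℕ := fun q => if q ∈ I.image F then 1 else 0 with hξ
  have hFblock : ∀ p : ℕ × ℕ, F p ∈ block2 p.1 p.2 := by
    intro p
    rw [mem_block2]
    constructor
    · by_cases hs : sigmaI I p.1 p.2 ≤ c p.1 <;> simp [hF, hs]
    · by_cases hr : rhoI I p.2 p.1 ≤ r p.2 <;> simp [hF, hr]
  have hF1 : ∀ p : ℕ × ℕ, (F p).1 = if sigmaI I p.1 p.2 ≤ c p.1 then p.1 else p.1 + 1 := by
    intro p; rw [hF]
  have hF2 : ∀ p : ℕ × ℕ, (F p).2 = if rhoI I p.2 p.1 ≤ r p.2 then p.2 else p.2 + 1 := by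
    intro p; rw [hF]
  have hFinj : ∀ p ∈ I, ∀ p' ∈ I, F p = F p' → p = p' := by
    intro p hp p' hp' heq
    by_contra hne
    have hd := blocks_disjoint hI hp hp' hne
    exact (Finset.disjoint_left.mp hd (hFblock p)) (heq ▸ hFblock p')
  have hsum_card : ∀ t : Finset (ℕ × ℕ),
      ∑ q ∈ t, ξ q = (t.filter (fun q => q ∈ I.image F)).card := by
    intro t
    rw [Finset.card_filter]
  refine ⟨ξ, ?_, ?_, ?_, ?_⟩
  · intro q _
    simp only [hξ]
    split <;> simp
  · -- row sums
    intro j hjY l hl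
    obtain ⟨p0, hp0, hp0j⟩ := mem_image.mp hjY
    have hjodd : j % 2 = 1 := hp0j ▸ (oddCoords hI hp0).2.1
    have hcond := (h p0 hp0).1
    rw [hp0j] at hcond
    rw [rho_top hI] at hcond
    set S := I.filter (fun q => q.2 = j) with hS
    have key : ∑ q ∈ (gridG I).filter (fun q => q.2 = j + l), ξ q
        = (I.filter (fun p => (F p).2 = j + l)).card := by
      rw [hsum_card, Finset.filter_filter]
      have himg : (gridG I).filter (fun q => q.2 = j + l ∧ q ∈ I.image F)
          = (I.filter (fun p => (F p).2 = j + l)).image F := by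
        ext q
        simp only [mem_filter, mem_image, gridG, mem_biUnion]
        constructor
        · rintro ⟨⟨p', hp', hqb⟩, hq2, p'', hp'', rfl⟩
          exact ⟨p'', ⟨hp'', hq2⟩, rfl⟩
        · rintro ⟨p', ⟨hp', hq2⟩, rfl⟩
          exact ⟨⟨p', hp', hFblock p'⟩, hq2, p', hp', rfl⟩
      rw [himg]
      apply Finset.card_image_of_injOn
      intro a ha b hb
      exact hFinj a (mem_filter.mp ha).1 b (mem_filter.mp hb).1
    have hpos : (I.filter (fun p => p.2 = j ∧ rhoI I j p.1 ≤ r j)).card = r j := by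
      rw [row_count, ← hS]
      omega
    have hsplit : (I.filter (fun p => p.2 = j ∧ rhoI I j p.1 ≤ r j)).card
        + (I.filter (fun p => p.2 = j ∧ ¬ rhoI I j p.1 ≤ r j)).card = S.card := by
      rw [hS, ← Finset.filter_filter, ← Finset.filter_filter,
        Finset.card_filter_add_card_filter_not]
    rw [key]
    have hl' : l = 0 ∨ l = 1 := by
      simp only [mem_insert, mem_singleton] at hl
      tauto
    rcases hl' with rfl | rfl
    · have heq : I.filter (fun p => (F p).2 = j + 0)
          = I.filter (fun p => p.2 = j ∧ rhoI I j p.1 ≤ r j) := by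
        apply Finset.filter_congr
        intro p hp
        have hpodd := (oddCoords hI hp).2.1
        rw [hF2]
        by_cases hcase : rhoI I p.2 p.1 ≤ r p.2
        · rw [if_pos hcase]
          constructor
          · intro hpj
            have hpj' : p.2 = j := by omega
            rw [hpj'] at hcase
            exact ⟨hpj', hcase⟩
          · intro hc; omega
        · rw [if_neg hcase]
          constructor
          · intro hpj; omega
          · rintro ⟨h1, h2⟩
            rw [h1] at hcase
            exact absurd h2 hcase
      rw [heq, hpos]
      norm_num
    · have heq : I.filter (fun p => (F p).2 = j + 1)
          = I.filter (fun p => p.2 = j ∧ ¬ rhoI I j p.1 ≤ r j) := by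
        apply Finset.filter_congr
        intro p hp
        have hpodd := (oddCoords hI hp).2.1
        rw [hF2]
        by_cases hcase : rhoI I p.2 p.1 ≤ r p.2
        · rw [if_pos hcase]
          constructor
          · intro hpj; omega
          · rintro ⟨h1, h2⟩
            rw [h1] at hcase
            exact absurd hcase h2
        · rw [if_neg hcase]
          constructor
          · intro hpj
            have hpj' : p.2 = j := by omega
            rw [hpj'] at hcase
            exact ⟨hpj', hcase⟩
          · intro hc; omega
      rw [heq]
      omega
  · -- column sums
    intro i hiX l hl
    obtain ⟨p0, hp0, hp0i⟩ := mem_image.mp hiX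
    have hiodd : i % 2 = 1 := hp0i ▸ (oddCoords hI hp0).1
    have hcond := (h p0 hp0).2
    rw [hp0i] at hcond
    rw [sigma_top hI] at hcond
    set S := I.filter (fun q => q.1 = i) with hS
    have key : ∑ q ∈ (gridG I).filter (fun q => q.1 = i + l), ξ q
        = (I.filter (fun p => (F p).1 = i + l)).card := by
      rw [hsum_card, Finset.filter_filter]
      have himg : (gridG I).filter (fun q => q.1 = i + l ∧ q ∈ I.image F)
          = (I.filter (fun p => (F p).1 = i + l)).image F := by
        ext q
        simp only [mem_filter, mem_image, gridG, mem_biUnion]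
        constructor
        · rintro ⟨⟨p', hp', hqb⟩, hq1, p'', hp'', rfl⟩
          exact ⟨p'', ⟨hp'', hq1⟩, rfl⟩
        · rintro ⟨p', ⟨hp', hq1⟩, rfl⟩
          exact ⟨⟨p', hp', hFblock p'⟩, hq1, p', hp', rfl⟩
      rw [himg]
      apply Finset.card_image_of_injOn
      intro a ha b hb
      exact hFinj a (mem_filter.mp ha).1 b (mem_filter.mp hb).1
    have hpos : (I.filter (fun p => p.1 = i ∧ sigmaI I i p.2 ≤ c i)).card = c i := by
      rw [col_count, ← hS]
      omega
    have hsplit : (I.filter (fun p => p.1 = i ∧ sigmaI I i p.2 ≤ c i)).card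
        + (I.filter (fun p => p.1 = i ∧ ¬ sigmaI I i p.2 ≤ c i)).card = S.card := by
      rw [hS, ← Finset.filter_filter, ← Finset.filter_filter,
        Finset.card_filter_add_card_filter_not]
    rw [key]
    have hl' : l = 0 ∨ l = 1 := by
      simp only [mem_insert, mem_singleton] at hl
      tauto
    rcases hl' with rfl | rfl
    · have heq : I.filter (fun p => (F p).1 = i + 0)
          = I.filter (fun p => p.1 = i ∧ sigmaI I i p.2 ≤ c i) := by
        apply Finset.filter_congr
        intro p hp
        have hpodd := (oddCoords hI hp).1
        rw [hF1]
        by_cases hcase : sigmaI I p.1 p.2 ≤ c p.1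
        · rw [if_pos hcase]
          constructor
          · intro hpi
            have hpi' : p.1 = i := by omega
            rw [hpi'] at hcase
            exact ⟨hpi', hcase⟩
          · intro hc; omega
        · rw [if_neg hcase]
          constructor
          · intro hpi; omega
          · rintro ⟨h1, h2⟩
            rw [h1] at hcase
            exact absurd h2 hcase
      rw [heq, hpos]
      norm_num
    · have heq : I.filter (fun p => (F p).1 = i + 1)
          = I.filter (fun p => p.1 = i ∧ ¬ sigmaI I i p.2 ≤ c i) := by
        apply Finset.filter_congr
        intro p hp
        have hpodd := (oddCoords hI hp).1
        rw [hF1]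
        by_cases hcase : sigmaI I p.1 p.2 ≤ c p.1
        · rw [if_pos hcase]
          constructor
          · intro hpi; omega
          · rintro ⟨h1, h2⟩
            rw [h1] at hcase
            exact absurd hcase h2
        · rw [if_neg hcase]
          constructor
          · intro hpi
            have hpi' : p.1 = i := by omega
            rw [hpi'] at hcase
            exact ⟨hpi', hcase⟩
          · intro hc; omega
      rw [heq]
      omega
  · -- block sums
    intro p hp
    rw [hsum_card]
    have hsingle : (block2 p.1 p.2).filter (fun q => q ∈ I.image F) = {F p} := by
      ext q
      simp only [mem_filter, mem_singleton, mem_image]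
      constructor
      · rintro ⟨hqb, p', hp', rfl⟩
        have hpp : p' = p := by
          by_contra hne
          exact (Finset.disjoint_left.mp (blocks_disjoint hI hp' hp hne) (hFblock p')) hqb
        rw [hpp]
      · rintro rfl
        exact ⟨hFblock p, p, hp, rfl⟩
    rw [hsingle, card_singleton]

/-- Feasibility criterion for `DR(1)`: a solution with exactly one 1 per block exists
iff for every `(i,j) ∈ I`, `r_j + r_{j+1} = ρ_j(m)` and `c_i + c_{i+1} = σ_i(n)`. -/
theorem dr1_feasibility (m n : ℕ) (hm2 : m % 2 = 0) (hn2 : n % 2 = 0)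
    (hm : 0 < m) (hn : 0 < n)
    (I : Finset (ℕ × ℕ)) (hI : I ⊆ cornerSet m n) (r c : ℕ → ℕ) :
    (∃ ξ : ℕ × ℕ → ℕ, IsDRSol I r c 1 ξ) ↔
    (∀ p ∈ I, r p.2 + r (p.2 + 1) = rhoI I p.2 m ∧ c p.1 + c (p.1 + 1) = sigmaI I p.1 n) := by
  constructor
  · rintro ⟨ξ, hξ⟩
    have hξ' : IsDRSol' I r c 1 ξ := hξ
    exact fun p hp => ⟨forward_row hI hξ' hp, forward_col hI hξ' hp⟩
  · intro h
    exact backward hI h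
end

section
/- With the notation of the DR(1) problem (blocks B(i,j), (i,j) ∈ I ⊆ C(m,n,2), each required to contain exactly one 1, with prescribed row sums r_j, r_{j+1} and column sums c_i, c_{i+1}), a feasible instance has a unique solution if and only if for every (i,j) ∈ I we have r_j · r_{j+1} = 0 and c_i · c_{i+1} = 0. -/
open Finset

set_option maxHeartbeats 2000000

lemma mem_block2_iff (q : ℕ × ℕ) (i j : ℕ) :
    q ∈ block2 i j ↔ (q.1 = i ∨ q.1 = i + 1) ∧ (q.2 = j ∨ q.2 = j + 1) := by
  simp [block2, Prod.ext_iff]; tauto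

lemma block2_sum (f : ℕ × ℕ → ℕ) (i j : ℕ) :
    ∑ q ∈ block2 i j, f q = f (i,j) + f (i+1,j) + f (i,j+1) + f (i+1,j+1) := by
  have h1 : ((i,j) : ℕ×ℕ) ∉ ({(i+1,j),(i,j+1),(i+1,j+1)} : Finset (ℕ×ℕ)) := by
    simp [Prod.ext_iff]
  have h2 : ((i+1,j) : ℕ×ℕ) ∉ ({(i,j+1),(i+1,j+1)} : Finset (ℕ×ℕ)) := by
    simp [Prod.ext_iff]
  have h3 : ((i,j+1) : ℕ×ℕ) ∉ ({(i+1,j+1)} : Finset (ℕ×ℕ)) := by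
    simp
  rw [block2]
  rw [Finset.sum_insert h1, Finset.sum_insert h2, Finset.sum_insert h3, Finset.sum_singleton]
  ring

lemma cornerSet_odd {m n : ℕ} {p : ℕ × ℕ} (h : p ∈ cornerSet m n) :
    p.1 % 2 = 1 ∧ p.2 % 2 = 1 := by
  simp [cornerSet] at h; tauto

lemma mem_gridG_of {I : Finset (ℕ × ℕ)} {i j : ℕ} (h : (i,j) ∈ I) {q : ℕ × ℕ}
    (hq : q ∈ block2 i j) : q ∈ gridG I :=
  Finset.mem_biUnion.2 ⟨(i,j), h, hq⟩

lemma sol_row_eq {I : Finset (ℕ×ℕ)} {r c : ℕ → ℕ} {ξ : ℕ×ℕ → ℕ}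
    (hξ : IsDRSol I r c 1 ξ) {j : ℕ} (hj : j ∈ PiY I) (l : ℕ) (hl : l = 0 ∨ l = 1) :
    ∑ p ∈ (gridG I).filter (fun q => q.2 = j + l), ξ p = r (j + l) :=
  hξ.2.1 j hj l (by rcases hl with h | h <;> simp [h])

lemma sol_col_eq {I : Finset (ℕ×ℕ)} {r c : ℕ → ℕ} {ξ : ℕ×ℕ → ℕ}
    (hξ : IsDRSol I r c 1 ξ) {i : ℕ} (hi : i ∈ PiX I) (l : ℕ) (hl : l = 0 ∨ l = 1) :
    ∑ p ∈ (gridG I).filter (fun q => q.1 = i + l), ξ p = c (i + l) :=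
  hξ.2.2.1 i hi l (by rcases hl with h | h <;> simp [h])

lemma row_zero {I : Finset (ℕ×ℕ)} {r c : ℕ → ℕ} {ξ : ℕ×ℕ → ℕ}
    (hξ : IsDRSol I r c 1 ξ) {j : ℕ} (hj : j ∈ PiY I) (l : ℕ) (hl : l = 0 ∨ l = 1)
    (h0 : r (j + l) = 0) {q : ℕ × ℕ} (hq : q ∈ gridG I) (hq2 : q.2 = j + l) : ξ q = 0 := by
  have h := sol_row_eq hξ hj l hl
  rw [h0] at h
  exact (Finset.sum_eq_zero_iff.1 h) q (Finset.mem_filter.2 ⟨hq, hq2⟩)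

lemma col_zero {I : Finset (ℕ×ℕ)} {r c : ℕ → ℕ} {ξ : ℕ×ℕ → ℕ}
    (hξ : IsDRSol I r c 1 ξ) {i : ℕ} (hi : i ∈ PiX I) (l : ℕ) (hl : l = 0 ∨ l = 1)
    (h0 : c (i + l) = 0) {q : ℕ × ℕ} (hq : q ∈ gridG I) (hq1 : q.1 = i + l) : ξ q = 0 := by
  have h := sol_col_eq hξ hi l hl
  rw [h0] at h
  exact (Finset.sum_eq_zero_iff.1 h) q (Finset.mem_filter.2 ⟨hq, hq1⟩)

lemma exists_other_row {m n : ℕ} {I : Finset (ℕ × ℕ)} (hI : I ⊆ cornerSet m n)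
    {r c : ℕ → ℕ} {ξ : ℕ × ℕ → ℕ} (hξ : IsDRSol I r c 1 ξ)
    {j0 : ℕ} (hj0 : j0 ∈ PiY I) (h1 : r j0 ≠ 0) (h2 : r (j0 + 1) ≠ 0) :
    ∃ ξ', IsDRSol I r c 1 ξ' ∧ ∃ p ∈ gridG I, ξ p ≠ ξ' p := by
  -- j0 is odd
  obtain ⟨p0, hp0I, hp0⟩ := Finset.mem_image.1 hj0
  have hj0odd : j0 % 2 = 1 := by
    have := (cornerSet_odd (hI hp0I)).2; omega
  -- find a 1 in row j0
  have hrow0 : ∑ p ∈ (gridG I).filter (fun q => q.2 = j0), ξ p = r j0 := by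
    simpa using sol_row_eq hξ hj0 0 (Or.inl rfl)
  obtain ⟨q1, hq1m, hq1ne⟩ := Finset.exists_ne_zero_of_sum_ne_zero (hrow0 ▸ h1)
  obtain ⟨hq1g, hq1y⟩ := Finset.mem_filter.1 hq1m
  obtain ⟨a, y1⟩ := q1
  replace hq1y : y1 = j0 := hq1y
  subst y1
  have hv1 : ξ (a, j0) = 1 := by have := hξ.1 _ hq1g; omega
  obtain ⟨⟨i1, j1⟩, hi1I, hq1b⟩ := Finset.mem_biUnion.1 hq1g
  have ho1 := cornerSet_odd (hI hi1I)
  simp only at ho1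
  rw [mem_block2_iff] at hq1b
  simp only at hq1b
  have hj1 : j1 = j0 := by omega
  subst j1
  have ha : a = i1 ∨ a = i1 + 1 := hq1b.1
  -- find a 1 in row j0+1
  have hrow1 : ∑ p ∈ (gridG I).filter (fun q => q.2 = j0 + 1), ξ p = r (j0 + 1) :=
    sol_row_eq hξ hj0 1 (Or.inr rfl)
  obtain ⟨q2, hq2m, hq2ne⟩ := Finset.exists_ne_zero_of_sum_ne_zero (hrow1 ▸ h2)
  obtain ⟨hq2g, hq2y⟩ := Finset.mem_filter.1 hq2m
  obtain ⟨b, y2⟩ := q2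
  replace hq2y : y2 = j0 + 1 := hq2y
  subst y2
  have hv2 : ξ (b, j0 + 1) = 1 := by have := hξ.1 _ hq2g; omega
  obtain ⟨⟨i2, j2⟩, hi2I, hq2b⟩ := Finset.mem_biUnion.1 hq2g
  have ho2 := cornerSet_odd (hI hi2I)
  simp only at ho2
  rw [mem_block2_iff] at hq2b
  simp only at hq2b
  have hj2 : j2 = j0 := by omega
  subst j2
  have hb : b = i2 ∨ b = i2 + 1 := hq2b.1
  -- block sums and bounds
  have hbs1 : ξ (i1, j0) + ξ (i1+1, j0) + ξ (i1, j0+1) + ξ (i1+1, j0+1) = 1 := by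
    have := hξ.2.2.2 (i1, j0) hi1I
    rwa [block2_sum] at this
  have hbs2 : ξ (i2, j0) + ξ (i2+1, j0) + ξ (i2, j0+1) + ξ (i2+1, j0+1) = 1 := by
    have := hξ.2.2.2 (i2, j0) hi2I
    rwa [block2_sum] at this
  have hmem1 : ∀ q ∈ block2 i1 j0, q ∈ gridG I := fun q hq => mem_gridG_of hi1I hq
  have hmem2 : ∀ q ∈ block2 i2 j0, q ∈ gridG I := fun q hq => mem_gridG_of hi2I hq
  have hga : (a, j0) ∈ gridG I := hq1g
  have hga1 : (a, j0 + 1) ∈ gridG I := by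
    apply hmem1; rw [mem_block2_iff]; exact ⟨ha, Or.inr rfl⟩
  have hgb1 : (b, j0 + 1) ∈ gridG I := hq2g
  have hgb : (b, j0) ∈ gridG I := by
    apply hmem2; rw [mem_block2_iff]; exact ⟨hb, Or.inl rfl⟩
  -- i1 ≠ i2
  have hne12 : i1 ≠ i2 := by
    rintro rfl
    rcases ha with rfl | rfl <;> rcases hb with rfl | rfl <;> omega
  have hab : a ≠ b := by omega
  -- additional zero values
  have hz1 : ξ (a, j0 + 1) = 0 := by
    have b1 := hξ.1 _ hga1
    rcases ha with rfl | rfl <;> omega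
  have hz2 : ξ (b, j0) = 0 := by
    have b2 := hξ.1 _ hgb
    rcases hb with rfl | rfl <;> omega
  -- the switched solution
  set ξ' : ℕ × ℕ → ℕ := fun q =>
    if q = (a, j0) then 0 else if q = (a, j0 + 1) then 1
    else if q = (b, j0) then 1 else if q = (b, j0 + 1) then 0 else ξ q with hξ'def
  have d12 : ((a, j0) : ℕ × ℕ) ≠ (a, j0 + 1) := by simp
  have d13 : ((a, j0) : ℕ × ℕ) ≠ (b, j0) := by simp [hab]
  have d14 : ((a, j0) : ℕ × ℕ) ≠ (b, j0 + 1) := by simp [hab]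
  have d23 : ((a, j0 + 1) : ℕ × ℕ) ≠ (b, j0) := by simp [hab]
  have d24 : ((a, j0 + 1) : ℕ × ℕ) ≠ (b, j0 + 1) := by simp [hab]
  have d34 : ((b, j0) : ℕ × ℕ) ≠ (b, j0 + 1) := by simp
  have hpt : ∀ q : ℕ × ℕ,
      ξ' q + ((if q = (a, j0) then 1 else 0) + (if q = (b, j0 + 1) then 1 else 0))
      = ξ q + ((if q = (a, j0 + 1) then 1 else 0) + (if q = (b, j0) then 1 else 0)) := by
    intro q
    simp only [hξ'def]
    by_cases e1 : q = (a, j0)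
    · subst e1; simp [d12, d13, d14, hv1]
    by_cases e2 : q = (a, j0 + 1)
    · subst e2; simp [Ne.symm d12, d23, d24, hz1]
    by_cases e3 : q = (b, j0)
    · subst e3; simp [Ne.symm d13, Ne.symm d23, d34, hz2]
    by_cases e4 : q = (b, j0 + 1)
    · subst e4; simp [Ne.symm d14, Ne.symm d24, Ne.symm d34, hv2]
    simp [e1, e2, e3, e4]
  have hsum : ∀ S : Finset (ℕ × ℕ),
      (∑ q ∈ S, ξ' q) + ((if (a, j0) ∈ S then 1 else 0) + (if (b, j0 + 1) ∈ S then 1 else 0))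
      = (∑ q ∈ S, ξ q) + ((if (a, j0 + 1) ∈ S then 1 else 0) + (if (b, j0) ∈ S then 1 else 0)) := by
    intro S
    have h := Finset.sum_congr rfl (fun q (_ : q ∈ S) => hpt q)
    simpa only [Finset.sum_add_distrib, Finset.sum_ite_eq', Finset.sum_boole] using h
  refine ⟨ξ', ⟨?_, ?_, ?_, ?_⟩, (a, j0), hga, ?_⟩
  · intro p hp
    simp only [hξ'def]
    split_ifs <;> first | omega | exact hξ.1 p hp
  · intro y hy l hl
    have hS := hsum ((gridG I).filter (fun q => q.2 = y + l))
    simp only [Finset.mem_filter, hga, hga1, hgb, hgb1, true_and] at hS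
    have horig := hξ.2.1 y hy l hl
    by_cases e1 : (j0 : ℕ) = y + l <;> by_cases e2 : j0 + 1 = y + l <;>
      simp only [e1, e2, if_true, if_false, if_pos, if_neg, ite_true, ite_false] at hS <;>
      omega
  · intro x hx l hl
    have hS := hsum ((gridG I).filter (fun q => q.1 = x + l))
    simp only [Finset.mem_filter, hga, hga1, hgb, hgb1, true_and] at hS
    have horig := hξ.2.2.1 x hx l hl
    by_cases e1 : a = x + l <;> by_cases e2 : b = x + l <;>
      simp only [e1, e2, if_true, if_false, ite_true, ite_false] at hS <;>
      omega
  · rintro ⟨i, j⟩ hpI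
    have ho := cornerSet_odd (hI hpI)
    simp only at ho
    have hS := hsum (block2 i j)
    have ea : ((a, j0) ∈ block2 i j) ↔ (i = i1 ∧ j = j0) := by
      rw [mem_block2_iff]
      constructor
      · intro h; simp only at h; omega
      · rintro ⟨rfl, rfl⟩; exact ⟨ha, Or.inl rfl⟩
    have ea1 : ((a, j0 + 1) ∈ block2 i j) ↔ (i = i1 ∧ j = j0) := by
      rw [mem_block2_iff]
      constructor
      · intro h; simp only at h; omega
      · rintro ⟨rfl, rfl⟩; exact ⟨ha, Or.inr rfl⟩
    have eb : ((b, j0) ∈ block2 i j) ↔ (i = i2 ∧ j = j0) := by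
      rw [mem_block2_iff]
      constructor
      · intro h; simp only at h; omega
      · rintro ⟨rfl, rfl⟩; exact ⟨hb, Or.inl rfl⟩
    have eb1 : ((b, j0 + 1) ∈ block2 i j) ↔ (i = i2 ∧ j = j0) := by
      rw [mem_block2_iff]
      constructor
      · intro h; simp only at h; omega
      · rintro ⟨rfl, rfl⟩; exact ⟨hb, Or.inr rfl⟩
    simp only [ea, ea1, eb, eb1] at hS
    have horig : ∑ q ∈ block2 i j, ξ q = 1 := hξ.2.2.2 (i, j) hpI
    show ∑ q ∈ block2 i j, ξ' q = 1
    by_cases e1 : (i = i1 ∧ j = j0) <;> by_cases e2 : (i = i2 ∧ j = j0)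
    · exact absurd (e1.1.symm.trans e2.1) hne12
    · rw [if_pos e1, if_neg e2] at hS; omega
    · rw [if_neg e1, if_pos e2] at hS; omega
    · rw [if_neg e1, if_neg e2] at hS; omega
  · simp only [hξ'def, if_pos rfl]
    omega

lemma exists_other_col {m n : ℕ} {I : Finset (ℕ × ℕ)} (hI : I ⊆ cornerSet m n)
    {r c : ℕ → ℕ} {ξ : ℕ × ℕ → ℕ} (hξ : IsDRSol I r c 1 ξ)
    {i0 : ℕ} (hi0 : i0 ∈ PiX I) (h1 : c i0 ≠ 0) (h2 : c (i0 + 1) ≠ 0) :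
    ∃ ξ', IsDRSol I r c 1 ξ' ∧ ∃ p ∈ gridG I, ξ p ≠ ξ' p := by
  obtain ⟨p0, hp0I, hp0⟩ := Finset.mem_image.1 hi0
  have hi0odd : i0 % 2 = 1 := by
    have := (cornerSet_odd (hI hp0I)).1; omega
  have hcol0 : ∑ p ∈ (gridG I).filter (fun q => q.1 = i0), ξ p = c i0 := by
    simpa using sol_col_eq hξ hi0 0 (Or.inl rfl)
  obtain ⟨q1, hq1m, hq1ne⟩ := Finset.exists_ne_zero_of_sum_ne_zero (hcol0 ▸ h1)
  obtain ⟨hq1g, hq1x⟩ := Finset.mem_filter.1 hq1m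
  obtain ⟨x1, a⟩ := q1
  replace hq1x : x1 = i0 := hq1x
  subst x1
  have hv1 : ξ (i0, a) = 1 := by have := hξ.1 _ hq1g; omega
  obtain ⟨⟨i1, j1⟩, hi1I, hq1b⟩ := Finset.mem_biUnion.1 hq1g
  have ho1 := cornerSet_odd (hI hi1I)
  simp only at ho1
  rw [mem_block2_iff] at hq1b
  simp only at hq1b
  have hi1' : i1 = i0 := by omega
  subst i1
  have ha : a = j1 ∨ a = j1 + 1 := hq1b.2
  -- a 1 in column i0+1
  have hcol1 : ∑ p ∈ (gridG I).filter (fun q => q.1 = i0 + 1), ξ p = c (i0 + 1) :=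
    sol_col_eq hξ hi0 1 (Or.inr rfl)
  obtain ⟨q2, hq2m, hq2ne⟩ := Finset.exists_ne_zero_of_sum_ne_zero (hcol1 ▸ h2)
  obtain ⟨hq2g, hq2x⟩ := Finset.mem_filter.1 hq2m
  obtain ⟨x2, b⟩ := q2
  replace hq2x : x2 = i0 + 1 := hq2x
  subst x2
  have hv2 : ξ (i0 + 1, b) = 1 := by have := hξ.1 _ hq2g; omega
  obtain ⟨⟨i2, j2⟩, hi2I, hq2b⟩ := Finset.mem_biUnion.1 hq2g
  have ho2 := cornerSet_odd (hI hi2I)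
  simp only at ho2
  rw [mem_block2_iff] at hq2b
  simp only at hq2b
  have hi2' : i2 = i0 := by omega
  subst i2
  have hb : b = j2 ∨ b = j2 + 1 := hq2b.2
  -- block sums and bounds
  have hbs1 : ξ (i0, j1) + ξ (i0+1, j1) + ξ (i0, j1+1) + ξ (i0+1, j1+1) = 1 := by
    have := hξ.2.2.2 (i0, j1) hi1I
    rwa [block2_sum] at this
  have hbs2 : ξ (i0, j2) + ξ (i0+1, j2) + ξ (i0, j2+1) + ξ (i0+1, j2+1) = 1 := by
    have := hξ.2.2.2 (i0, j2) hi2I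
    rwa [block2_sum] at this
  have hmem1 : ∀ q ∈ block2 i0 j1, q ∈ gridG I := fun q hq => mem_gridG_of hi1I hq
  have hmem2 : ∀ q ∈ block2 i0 j2, q ∈ gridG I := fun q hq => mem_gridG_of hi2I hq
  have hga : (i0, a) ∈ gridG I := hq1g
  have hga1 : (i0 + 1, a) ∈ gridG I := by
    apply hmem1; rw [mem_block2_iff]; exact ⟨Or.inr rfl, ha⟩
  have hgb1 : (i0 + 1, b) ∈ gridG I := hq2g
  have hgb : (i0, b) ∈ gridG I := by
    apply hmem2; rw [mem_block2_iff]; exact ⟨Or.inl rfl, hb⟩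
  have hne12 : j1 ≠ j2 := by
    rintro rfl
    rcases ha with rfl | rfl <;> rcases hb with rfl | rfl <;> omega
  have hab : a ≠ b := by omega
  have hz1 : ξ (i0 + 1, a) = 0 := by
    have b1 := hξ.1 _ hga1
    rcases ha with rfl | rfl <;> omega
  have hz2 : ξ (i0, b) = 0 := by
    have b2 := hξ.1 _ hgb
    rcases hb with rfl | rfl <;> omega
  set ξ' : ℕ × ℕ → ℕ := fun q =>
    if q = (i0, a) then 0 else if q = (i0 + 1, a) then 1
    else if q = (i0, b) then 1 else if q = (i0 + 1, b) then 0 else ξ q with hξ'def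
  have d12 : ((i0, a) : ℕ × ℕ) ≠ (i0 + 1, a) := by simp
  have d13 : ((i0, a) : ℕ × ℕ) ≠ (i0, b) := by simp [hab]
  have d14 : ((i0, a) : ℕ × ℕ) ≠ (i0 + 1, b) := by simp
  have d23 : ((i0 + 1, a) : ℕ × ℕ) ≠ (i0, b) := by simp
  have d24 : ((i0 + 1, a) : ℕ × ℕ) ≠ (i0 + 1, b) := by simp [hab]
  have d34 : ((i0, b) : ℕ × ℕ) ≠ (i0 + 1, b) := by simp
  have hpt : ∀ q : ℕ × ℕ,
      ξ' q + ((if q = (i0, a) then 1 else 0) + (if q = (i0 + 1, b) then 1 else 0))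
      = ξ q + ((if q = (i0 + 1, a) then 1 else 0) + (if q = (i0, b) then 1 else 0)) := by
    intro q
    simp only [hξ'def]
    by_cases e1 : q = (i0, a)
    · subst e1; simp [d12, d13, d14, hv1]
    by_cases e2 : q = (i0 + 1, a)
    · subst e2; simp [Ne.symm d12, d23, d24, hz1]
    by_cases e3 : q = (i0, b)
    · subst e3; simp [Ne.symm d13, Ne.symm d23, d34, hz2]
    by_cases e4 : q = (i0 + 1, b)
    · subst e4; simp [Ne.symm d14, Ne.symm d24, Ne.symm d34, hv2]
    simp [e1, e2, e3, e4]
  have hsum : ∀ S : Finset (ℕ × ℕ),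
      (∑ q ∈ S, ξ' q) + ((if (i0, a) ∈ S then 1 else 0) + (if (i0 + 1, b) ∈ S then 1 else 0))
      = (∑ q ∈ S, ξ q) + ((if (i0 + 1, a) ∈ S then 1 else 0) + (if (i0, b) ∈ S then 1 else 0)) := by
    intro S
    have h := Finset.sum_congr rfl (fun q (_ : q ∈ S) => hpt q)
    simpa only [Finset.sum_add_distrib, Finset.sum_ite_eq', Finset.sum_boole] using h
  refine ⟨ξ', ⟨?_, ?_, ?_, ?_⟩, (i0, a), hga, ?_⟩
  · intro p hp
    simp only [hξ'def]
    split_ifs <;> first | omega | exact hξ.1 p hp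
  · intro y hy l hl
    have hS := hsum ((gridG I).filter (fun q => q.2 = y + l))
    simp only [Finset.mem_filter, hga, hga1, hgb, hgb1, true_and] at hS
    have horig := hξ.2.1 y hy l hl
    by_cases e1 : a = y + l <;> by_cases e2 : b = y + l <;>
      simp only [e1, e2, if_true, if_false, ite_true, ite_false] at hS <;>
      omega
  · intro x hx l hl
    have hS := hsum ((gridG I).filter (fun q => q.1 = x + l))
    simp only [Finset.mem_filter, hga, hga1, hgb, hgb1, true_and] at hS
    have horig := hξ.2.2.1 x hx l hl
    by_cases e1 : (i0 : ℕ) = x + l <;> by_cases e2 : i0 + 1 = x + l <;>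
      simp only [e1, e2, if_true, if_false, ite_true, ite_false] at hS <;>
      omega
  · rintro ⟨i, j⟩ hpI
    have ho := cornerSet_odd (hI hpI)
    simp only at ho
    have hS := hsum (block2 i j)
    have ea : ((i0, a) ∈ block2 i j) ↔ (i = i0 ∧ j = j1) := by
      rw [mem_block2_iff]
      constructor
      · intro h; simp only at h; omega
      · rintro ⟨rfl, rfl⟩; exact ⟨Or.inl rfl, ha⟩
    have ea1 : ((i0 + 1, a) ∈ block2 i j) ↔ (i = i0 ∧ j = j1) := by
      rw [mem_block2_iff]
      constructor
      · intro h; simp only at h; omega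
      · rintro ⟨rfl, rfl⟩; exact ⟨Or.inr rfl, ha⟩
    have eb : ((i0, b) ∈ block2 i j) ↔ (i = i0 ∧ j = j2) := by
      rw [mem_block2_iff]
      constructor
      · intro h; simp only at h; omega
      · rintro ⟨rfl, rfl⟩; exact ⟨Or.inl rfl, hb⟩
    have eb1 : ((i0 + 1, b) ∈ block2 i j) ↔ (i = i0 ∧ j = j2) := by
      rw [mem_block2_iff]
      constructor
      · intro h; simp only at h; omega
      · rintro ⟨rfl, rfl⟩; exact ⟨Or.inr rfl, hb⟩
    simp only [ea, ea1, eb, eb1] at hS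
    have horig : ∑ q ∈ block2 i j, ξ q = 1 := hξ.2.2.2 (i, j) hpI
    show ∑ q ∈ block2 i j, ξ' q = 1
    by_cases e1 : (i = i0 ∧ j = j1) <;> by_cases e2 : (i = i0 ∧ j = j2)
    · exact absurd (e1.2.symm.trans e2.2) hne12
    · rw [if_pos e1, if_neg e2] at hS; omega
    · rw [if_neg e1, if_pos e2] at hS; omega
    · rw [if_neg e1, if_neg e2] at hS; omega
  · simp only [hξ'def, if_pos rfl]
    omega


/-- Uniqueness criterion for a feasible instance of `DR(1)`: the solution is unique iff
for every `(i,j) ∈ I`, `r_j · r_{j+1} = 0` and `c_i · c_{i+1} = 0`. -/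
theorem dr1_uniqueness (m n : ℕ) (hm2 : m % 2 = 0) (hn2 : n % 2 = 0)
    (hm : 0 < m) (hn : 0 < n)
    (I : Finset (ℕ × ℕ)) (hI : I ⊆ cornerSet m n) (r c : ℕ → ℕ)
    (hfeas : ∃ ξ : ℕ × ℕ → ℕ, IsDRSol I r c 1 ξ) :
    (∀ ξ ξ' : ℕ × ℕ → ℕ, IsDRSol I r c 1 ξ → IsDRSol I r c 1 ξ' →
      ∀ p ∈ gridG I, ξ p = ξ' p) ↔
    (∀ p ∈ I, r p.2 * r (p.2 + 1) = 0 ∧ c p.1 * c (p.1 + 1) = 0) := by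
  constructor
  · intro huniq p hp
    by_contra hcon
    obtain ⟨ξ, hsol⟩ := hfeas
    rw [not_and_or] at hcon
    rcases hcon with hcon | hcon
    · replace hcon := Nat.mul_ne_zero_iff.mp hcon
      have hj0 : p.2 ∈ PiY I := Finset.mem_image.2 ⟨p, hp, rfl⟩
      obtain ⟨ξ', hsol', q, hq, hne⟩ := exists_other_row hI hsol hj0 hcon.1 hcon.2
      exact hne (huniq ξ ξ' hsol hsol' q hq)
    · replace hcon := Nat.mul_ne_zero_iff.mp hcon
      have hi0 : p.1 ∈ PiX I := Finset.mem_image.2 ⟨p, hp, rfl⟩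
      obtain ⟨ξ', hsol', q, hq, hne⟩ := exists_other_col hI hsol hi0 hcon.1 hcon.2
      exact hne (huniq ξ ξ' hsol hsol' q hq)
  · intro hcond ξ ξ' hs hs' p hp
    obtain ⟨px, py⟩ := p
    obtain ⟨⟨i, j⟩, hijI, hpb⟩ := Finset.mem_biUnion.1 hp
    obtain ⟨hr, hc⟩ := hcond (i, j) hijI
    simp only at hr hc
    rw [Nat.mul_eq_zero] at hr hc
    have hjY : j ∈ PiY I := Finset.mem_image.2 ⟨(i, j), hijI, rfl⟩
    have hiX : i ∈ PiX I := Finset.mem_image.2 ⟨(i, j), hijI, rfl⟩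
    have m00 : (i, j) ∈ gridG I := mem_gridG_of hijI (by rw [mem_block2_iff]; simp)
    have m10 : (i + 1, j) ∈ gridG I := mem_gridG_of hijI (by rw [mem_block2_iff]; simp)
    have m01 : (i, j + 1) ∈ gridG I := mem_gridG_of hijI (by rw [mem_block2_iff]; simp)
    have m11 : (i + 1, j + 1) ∈ gridG I := mem_gridG_of hijI (by rw [mem_block2_iff]; simp)
    have hbs : ξ (i, j) + ξ (i+1, j) + ξ (i, j+1) + ξ (i+1, j+1) = 1 := by
      have := hs.2.2.2 (i, j) hijI; rwa [block2_sum] at this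
    have hbs' : ξ' (i, j) + ξ' (i+1, j) + ξ' (i, j+1) + ξ' (i+1, j+1) = 1 := by
      have := hs'.2.2.2 (i, j) hijI; rwa [block2_sum] at this
    have key : ∀ η : ℕ × ℕ → ℕ, IsDRSol I r c 1 η →
        ((r j = 0 → η (i, j) = 0 ∧ η (i+1, j) = 0) ∧
         (r (j+1) = 0 → η (i, j+1) = 0 ∧ η (i+1, j+1) = 0) ∧
         (c i = 0 → η (i, j) = 0 ∧ η (i, j+1) = 0) ∧
         (c (i+1) = 0 → η (i+1, j) = 0 ∧ η (i+1, j+1) = 0)) := by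
      intro η hη
      refine ⟨fun h0 => ⟨?_, ?_⟩, fun h0 => ⟨?_, ?_⟩, fun h0 => ⟨?_, ?_⟩, fun h0 => ⟨?_, ?_⟩⟩
      · exact row_zero hη hjY 0 (Or.inl rfl) (by simpa using h0) m00 (by simp)
      · exact row_zero hη hjY 0 (Or.inl rfl) (by simpa using h0) m10 (by simp)
      · exact row_zero hη hjY 1 (Or.inr rfl) h0 m01 (by simp)
      · exact row_zero hη hjY 1 (Or.inr rfl) h0 m11 (by simp)
      · exact col_zero hη hiX 0 (Or.inl rfl) (by simpa using h0) m00 (by simp)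
      · exact col_zero hη hiX 0 (Or.inl rfl) (by simpa using h0) m01 (by simp)
      · exact col_zero hη hiX 1 (Or.inr rfl) h0 m10 (by simp)
      · exact col_zero hη hiX 1 (Or.inr rfl) h0 m11 (by simp)
    obtain ⟨k1, k2, k3, k4⟩ := key ξ hs
    obtain ⟨k1', k2', k3', k4'⟩ := key ξ' hs'
    have heq : ξ (i, j) = ξ' (i, j) ∧ ξ (i+1, j) = ξ' (i+1, j) ∧
        ξ (i, j+1) = ξ' (i, j+1) ∧ ξ (i+1, j+1) = ξ' (i+1, j+1) := by
      rcases hr with h | h <;> rcases hc with h' | h'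
      · obtain ⟨z1, z2⟩ := k1 h; obtain ⟨z3, z4⟩ := k3 h'
        obtain ⟨w1, w2⟩ := k1' h; obtain ⟨w3, w4⟩ := k3' h'
        omega
      · obtain ⟨z1, z2⟩ := k1 h; obtain ⟨z3, z4⟩ := k4 h'
        obtain ⟨w1, w2⟩ := k1' h; obtain ⟨w3, w4⟩ := k4' h'
        omega
      · obtain ⟨z1, z2⟩ := k2 h; obtain ⟨z3, z4⟩ := k3 h'
        obtain ⟨w1, w2⟩ := k2' h; obtain ⟨w3, w4⟩ := k3' h'
        omega
      · obtain ⟨z1, z2⟩ := k2 h; obtain ⟨z3, z4⟩ := k4 h'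
        obtain ⟨w1, w2⟩ := k2' h; obtain ⟨w3, w4⟩ := k4' h'
        omega
    rw [mem_block2_iff] at hpb
    obtain ⟨h1, h2⟩ := hpb
    simp only at h1 h2
    obtain ⟨q1, q2, q3, q4⟩ := heq
    rcases h1 with rfl | rfl <;> rcases h2 with rfl | rfl
    · exact q1
    · exact q3
    · exact q2
    · exact q4
end

section
/- Local switches terminate: define a potential function Φ on solutions ξ of a DR instance as the number of 2×2 blocks B(i,j) whose pattern is ξ_{i,j} = ξ_{i+1,j+1} = 1 and ξ_{i+1,j} = ξ_{i,j+1} = 0 (type B₃₃). Each local switch of classes 1–5 and 7 (as defined in the paper, each creating at least one new B₃₃ block and destroying none) strictly increases Φ. Since Φ is bounded above by the total number of blocks mn/4, any sequence of such switches is finite. -/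
open Finset

/-- The potential `Φ`: number of blocks of type `𝔅₃₃`, i.e. with
`ξ_{i,j} = ξ_{i+1,j+1} = 1` and `ξ_{i+1,j} = ξ_{i,j+1} = 0`. -/
def Phi (m n : ℕ) (ξ : ℕ × ℕ → ℕ) : ℕ :=
  ((cornerSet m n).filter (fun p =>
    ξ (p.1, p.2) = 1 ∧ ξ (p.1 + 1, p.2 + 1) = 1 ∧
    ξ (p.1 + 1, p.2) = 0 ∧ ξ (p.1, p.2 + 1) = 0)).card

/-
Blocks with odd corners are pairwise disjoint, so a switch inside the block at `(i, j)` changes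
the type of no other block; turning that block into type `𝔅₃₃` therefore raises `Φ` by one.
Since `Φ` counts a subset of the `(m/2)(n/2)` blocks, a chain of strict increases of `Φ`
has at most `mn/4` steps.
-/

lemma card_filter_odd_Icc_le (m : ℕ) : #{k ∈ Icc 1 m | k % 2 = 1} ≤ (m + 1) / 2 := by
  have hodd : ∀ k ∈ (({k ∈ Icc 1 m | k % 2 = 1} : Finset ℕ) : Set ℕ), 1 ≤ k ∧ k ≤ m ∧ k % 2 = 1 :=
    fun k hk => by simpa [and_assoc] using hk
  simpa using card_le_card_of_injOn (t := range ((m + 1) / 2)) (· / 2)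
    (fun k hk => by have := hodd k hk; simp; omega)
    (fun k hk l hl (hkl : k / 2 = l / 2) => by have := hodd k hk; have := hodd l hl; omega)

lemma card_cornerSet_le {m n : ℕ} (hm : m % 2 = 0) (hn : n % 2 = 0) :
    #(cornerSet m n) ≤ m * n / 4 := by
  rw [cornerSet, filter_product (fun a => a % 2 = 1) (fun b => b % 2 = 1), card_product,
    show m * n / 4 = m / 2 * (n / 2) from
      (Nat.div_mul_div_comm (Nat.dvd_of_mod_eq_zero hm) (Nat.dvd_of_mod_eq_zero hn)).symm]
  exact Nat.mul_le_mul
    ((card_filter_odd_Icc_le m).trans_eq (by omega))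
    ((card_filter_odd_Icc_le n).trans_eq (by omega))

lemma Phi_le {m n : ℕ} (hm : m % 2 = 0) (hn : n % 2 = 0) (ξ : ℕ × ℕ → ℕ) :
    Phi m n ξ ≤ m * n / 4 :=
  (card_filter_le _ _).trans (card_cornerSet_le hm hn)

abbrev IsB33 (ξ : ℕ × ℕ → ℕ) (p : ℕ × ℕ) : Prop :=
  ξ (p.1, p.2) = 1 ∧ ξ (p.1 + 1, p.2 + 1) = 1 ∧ ξ (p.1 + 1, p.2) = 0 ∧ ξ (p.1, p.2 + 1) = 0

lemma Phi_eq_card_filter_isB33 (m n : ℕ) (ξ : ℕ × ℕ → ℕ) :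
    Phi m n ξ = #{p ∈ cornerSet m n | IsB33 ξ p} := rfl

lemma isB33_congr {ξ ξ' : ℕ × ℕ → ℕ} {p : ℕ × ℕ} (h : Set.EqOn ξ ξ' (block2 p.1 p.2)) :
    IsB33 ξ p ↔ IsB33 ξ' p := by
  have e : ∀ q ∈ block2 p.1 p.2, ξ q = ξ' q := fun q hq => h hq
  rw [IsB33, IsB33, e _ (by simp [block2]), e _ (by simp [block2]), e _ (by simp [block2]),
    e _ (by simp [block2])]

lemma disjoint_block2 {a b i j : ℕ} (hai : a % 2 = i % 2) (hbj : b % 2 = j % 2)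
    (hne : (a, b) ≠ (i, j)) : Disjoint (block2 a b) (block2 i j) := by
  simp only [block2, disjoint_insert_left, disjoint_insert_right, disjoint_singleton,
    mem_insert, mem_singleton, Prod.ext_iff, ne_eq] at hne ⊢
  omega

lemma mem_cornerSet_parity {m n : ℕ} {p : ℕ × ℕ} (hp : p ∈ cornerSet m n) :
    p.1 % 2 = 1 ∧ p.2 % 2 = 1 :=
  (mem_filter.mp hp).2

lemma Phi_lt_of_eqOn_compl_block2 {m n i j : ℕ} (hij : (i, j) ∈ cornerSet m n)
    {ξ ξ' : ℕ × ℕ → ℕ} (heq : Set.EqOn ξ ξ' (↑(block2 i j))ᶜ)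
    (hξ : ¬ IsB33 ξ (i, j)) (hξ' : IsB33 ξ' (i, j)) :
    Phi m n ξ < Phi m n ξ' := by
  rw [Phi_eq_card_filter_isB33, Phi_eq_card_filter_isB33]
  refine card_lt_card ((ssubset_iff_of_subset ?_).mpr
    ⟨(i, j), mem_filter.mpr ⟨hij, hξ'⟩, fun h => hξ (mem_filter.mp h).2⟩)
  intro p hp
  obtain ⟨hp, hpξ⟩ := mem_filter.mp hp
  refine mem_filter.mpr ⟨hp, ?_⟩
  have hne : p ≠ (i, j) := by rintro rfl; exact hξ hpξ
  have hdisj : Disjoint (block2 p.1 p.2) (block2 i j) := by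
    obtain ⟨hp1, hp2⟩ := mem_cornerSet_parity hp
    obtain ⟨hi, hj⟩ := mem_cornerSet_parity hij
    exact disjoint_block2 (hp1.trans hi.symm) (hp2.trans hj.symm) hne
  exact (isB33_congr (heq.mono fun q hq => disjoint_left.mp hdisj hq)).mp hpξ

/-- The class-7 switch `𝔅₃₄ → 𝔅₃₃` on the block with corner `(i, j)`. -/
def switchToB33 (i j : ℕ) (ξ : ℕ × ℕ → ℕ) : ℕ × ℕ → ℕ := fun q =>
  if q = (i, j) then 1 else if q = (i + 1, j + 1) then 1
  else if q = (i + 1, j) then 0 else if q = (i, j + 1) then 0 else ξ q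

lemma switchToB33_eqOn (i j : ℕ) (ξ : ℕ × ℕ → ℕ) :
    Set.EqOn ξ (switchToB33 i j ξ) (↑(block2 i j))ᶜ := by
  intro q hq
  simp only [block2, coe_insert, coe_singleton, Set.mem_compl_iff, Set.mem_insert_iff,
    Set.mem_singleton_iff, not_or] at hq
  simp [switchToB33, hq]

lemma isB33_switchToB33 (i j : ℕ) (ξ : ℕ × ℕ → ℕ) : IsB33 (switchToB33 i j ξ) (i, j) := by
  simp [IsB33, switchToB33]

lemma Phi_lt_Phi_switchToB33 {m n i j : ℕ} (hij : (i, j) ∈ cornerSet m n)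
    {ξ : ℕ × ℕ → ℕ} (hξ : ¬ IsB33 ξ (i, j)) :
    Phi m n ξ < Phi m n (switchToB33 i j ξ) :=
  Phi_lt_of_eqOn_compl_block2 hij (switchToB33_eqOn i j ξ) hξ (isB33_switchToB33 i j ξ)

lemma le_apply_of_forall_lt_succ {g : ℕ → ℕ} {N : ℕ} (h : ∀ k < N, g k < g (k + 1)) : N ≤ g N := by
  induction N with
  | zero => exact Nat.zero_le _
  | succ N ih =>
    have := ih fun k hk => h k (by omega)
    have := h N (by omega)
    omega

theorem switches_terminate_general (m n : ℕ) (hm2 : m % 2 = 0) (hn2 : n % 2 = 0) :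
    (∀ ξ : ℕ × ℕ → ℕ, Phi m n ξ ≤ m * n / 4) ∧
    (∀ (i j : ℕ), (i, j) ∈ cornerSet m n → ∀ ξ : ℕ × ℕ → ℕ,
      ξ (i, j) = 0 → ξ (i + 1, j + 1) = 0 → ξ (i + 1, j) = 1 → ξ (i, j + 1) = 1 →
      Phi m n ξ < Phi m n (fun q =>
        if q = (i, j) then 1 else if q = (i + 1, j + 1) then 1
        else if q = (i + 1, j) then 0 else if q = (i, j + 1) then 0 else ξ q)) ∧
    (∀ (f : ℕ → (ℕ × ℕ → ℕ)) (N : ℕ),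
      (∀ k < N, Phi m n (f k) < Phi m n (f (k + 1))) → N ≤ m * n / 4) := by
  refine ⟨Phi_le hm2 hn2, fun i j hij ξ h0 _ _ _ => ?_, fun f N hf => ?_⟩
  · exact Phi_lt_Phi_switchToB33 hij (by simp [h0])
  · exact (le_apply_of_forall_lt_succ (g := fun k => Phi m n (f k)) hf).trans (Phi_le hm2 hn2 (f N))

/-- Termination of local switches: `Φ` is bounded by `mn/4`, a class-7 switch
(`𝔅₃₄ → 𝔅₃₃` in a single block) strictly increases `Φ`, and hence any sequence of
`Φ`-increasing switches has length at most `mn/4`. -/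
theorem switches_terminate (m n : ℕ) (hm2 : m % 2 = 0) (hn2 : n % 2 = 0)
    (hm : 0 < m) (hn : 0 < n) :
    (∀ ξ : ℕ × ℕ → ℕ, Phi m n ξ ≤ m * n / 4) ∧
    (∀ (i j : ℕ), (i, j) ∈ cornerSet m n → ∀ ξ : ℕ × ℕ → ℕ,
      ξ (i, j) = 0 → ξ (i + 1, j + 1) = 0 → ξ (i + 1, j) = 1 → ξ (i, j + 1) = 1 →
      Phi m n ξ < Phi m n (fun q =>
        if q = (i, j) then 1 else if q = (i + 1, j + 1) then 1
        else if q = (i + 1, j) then 0 else if q = (i, j + 1) then 0 else ξ q)) ∧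
    (∀ (f : ℕ → (ℕ × ℕ → ℕ)) (N : ℕ),
      (∀ k < N, Phi m n (f k) < Phi m n (f (k + 1))) → N ≤ m * n / 4) :=
  switches_terminate_general m n hm2 hn2
end

section
/- The transformation used to reduce nDR(ε) to nSR(k,ε) preserves solvability: let m, n ∈ 2ℕ, let an instance of the 2×2 block problem be given by row sums r_1,…,r_n, column sums c_1,…,c_m and block values v(i,j) for (i,j) ∈ C(m,n,2), and let k ≥ 2. Define m' = mk/2, n' = nk/2, r'_{(k/2)(j-1)+l} = r_{j+l-1} if l ∈ {1,2} and 0 otherwise (for each odd j and l ∈ [k]), analogously c', and v'(k(i−1)/2+1, k(j−1)/2+1) = v(i,j). Then the 2×2 instance has a 0/1 solution if and only if the k×k instance (m', n', r', c', v') has a 0/1 solution. -/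
open Finset

/-- Corner set `C(m,n,k)`: points of `[m]×[n]` with both coordinates `≡ 1 (mod k)`. -/
def kCorner (m n k : ℕ) : Finset (ℕ × ℕ) :=
  ((Finset.Icc 1 m) ×ˢ (Finset.Icc 1 n)).filter (fun p => p.1 % k = 1 ∧ p.2 % k = 1)

/-- The `k×k` block with lower-left corner `(i,j)`. -/
def kBlock (k i j : ℕ) : Finset (ℕ × ℕ) :=
  (Finset.Icc i (i + k - 1)) ×ˢ (Finset.Icc j (j + k - 1))

/-- Solvability of the noisy super-resolution instance `nSR(k,ε)` with data
`(m, n, r, c, R, v)`: a 0/1 image with the given row and column sums whose block sums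
are exact on `R` and within `±ε` elsewhere. -/
def SolvableNSR (k m n : ℕ) (r c : ℕ → ℕ) (R : Finset (ℕ × ℕ)) (v : ℕ × ℕ → ℕ)
    (ε : ℕ) : Prop :=
  ∃ ξ : ℕ × ℕ → ℕ,
    (∀ p ∈ (Finset.Icc 1 m) ×ˢ (Finset.Icc 1 n), ξ p ≤ 1) ∧
    (∀ q ∈ Finset.Icc 1 n, ∑ p ∈ Finset.Icc 1 m, ξ (p, q) = r q) ∧
    (∀ p ∈ Finset.Icc 1 m, ∑ q ∈ Finset.Icc 1 n, ξ (p, q) = c p) ∧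
    (∀ p ∈ R, ∑ q ∈ kBlock k p.1 p.2, ξ q = v p) ∧
    (∀ p ∈ kCorner m n k, p ∉ R →
      v p - ε ≤ ∑ q ∈ kBlock k p.1 p.2, ξ q ∧ ∑ q ∈ kBlock k p.1 p.2, ξ q ≤ v p + ε)

/-- The stretched row/column sums: `r'_{(k/2)(j−1)+l} = r_{j+l−1}` for `l ∈ {1,2}`
and `0` otherwise. -/
def stretchSums (k : ℕ) (r : ℕ → ℕ) (q : ℕ) : ℕ :=
  if (q - 1) % k < 2 then r (2 * ((q - 1) / k) + 1 + (q - 1) % k) else 0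

/-- Map an old coordinate to the corresponding new coordinate. -/
def toNew (k p : ℕ) : ℕ := (p - 1) / 2 * k + (p - 1) % 2 + 1

/-- Map a live new coordinate back to its old coordinate. -/
def toOld (k q : ℕ) : ℕ := 2 * ((q - 1) / k) + 1 + (q - 1) % k

lemma toNew_sub (k p : ℕ) : toNew k p - 1 = (p - 1) / 2 * k + (p - 1) % 2 := by
  simp [toNew]

lemma toNew_mod (k p : ℕ) (hk : 2 ≤ k) : (toNew k p - 1) % k = (p - 1) % 2 := by
  rw [toNew_sub, mul_comm, Nat.mul_add_mod, Nat.mod_eq_of_lt (lt_of_lt_of_le (Nat.mod_lt _ (by norm_num)) hk)]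

lemma toNew_div (k p : ℕ) (hk : 2 ≤ k) : (toNew k p - 1) / k = (p - 1) / 2 := by
  rw [toNew_sub, mul_comm, Nat.mul_add_div (by omega)]
  rw [Nat.div_eq_of_lt (lt_of_lt_of_le (Nat.mod_lt _ (by norm_num)) hk), add_zero]

lemma toOld_toNew (k p : ℕ) (hk : 2 ≤ k) (hp : 1 ≤ p) : toOld k (toNew k p) = p := by
  unfold toOld
  rw [toNew_mod k p hk, toNew_div k p hk]
  omega

lemma toNew_toOld (k q : ℕ) (hk : 2 ≤ k) (hq : 1 ≤ q) (hl : (q - 1) % k < 2) :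
    toNew k (toOld k q) = q := by
  have hkd := Nat.div_add_mod (q - 1) k
  unfold toNew toOld
  have h1 : 2 * ((q - 1) / k) + 1 + (q - 1) % k - 1 = 2 * ((q - 1) / k) + (q - 1) % k := by omega
  rw [h1]
  have h2 : (2 * ((q - 1) / k) + (q - 1) % k) / 2 = (q - 1) / k := by omega
  have h3 : (2 * ((q - 1) / k) + (q - 1) % k) % 2 = (q - 1) % k := by omega
  rw [h2, h3]
  have hc : (q - 1) / k * k = k * ((q - 1) / k) := mul_comm _ _
  omega

lemma toNew_mem (k m p : ℕ) (hk : 2 ≤ k) (hm2 : m % 2 = 0) (hp : p ∈ Finset.Icc 1 m) :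
    toNew k p ∈ Finset.Icc 1 (m / 2 * k) := by
  simp only [Finset.mem_Icc] at *
  constructor
  · unfold toNew; omega
  · have hab : (p - 1) / 2 + 1 ≤ m / 2 := by omega
    calc toNew k p = (p - 1) / 2 * k + (p - 1) % 2 + 1 := rfl
      _ ≤ (p - 1) / 2 * k + k := by omega
      _ = ((p - 1) / 2 + 1) * k := by ring
      _ ≤ m / 2 * k := Nat.mul_le_mul_right k hab

lemma toOld_mem (k m q : ℕ) (hk : 2 ≤ k) (hm2 : m % 2 = 0)
    (hq : q ∈ Finset.Icc 1 (m / 2 * k)) (hl : (q - 1) % k < 2) :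
    toOld k q ∈ Finset.Icc 1 m := by
  simp only [Finset.mem_Icc] at *
  have hdiv : (q - 1) / k < m / 2 := by
    rw [Nat.div_lt_iff_lt_mul (by omega : 0 < k)]
    have : 0 < m / 2 * k := by omega
    omega
  unfold toOld
  omega

/-- Master 1-D reindexing lemma: a sum over a new-coordinate set with dead entries
vanishing equals the sum over the corresponding old-coordinate set. -/
lemma sum_live {k : ℕ} (hk : 2 ≤ k) (S S' : Finset ℕ) (g : ℕ → ℕ)
    (h0 : ∀ q ∈ S', 2 ≤ (q - 1) % k → g q = 0)
    (h1 : ∀ p ∈ S, 1 ≤ p ∧ toNew k p ∈ S')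
    (h2 : ∀ q ∈ S', (q - 1) % k < 2 → 1 ≤ q ∧ toOld k q ∈ S) :
    ∑ q ∈ S', g q = ∑ p ∈ S, g (toNew k p) := by
  rw [← Finset.sum_filter_add_sum_filter_not S' (fun q => (q - 1) % k < 2)]
  have hdead : ∑ q ∈ S'.filter (fun q => ¬ (q - 1) % k < 2), g q = 0 := by
    apply Finset.sum_eq_zero
    intro q hq
    simp only [Finset.mem_filter] at hq
    exact h0 q hq.1 (by omega)
  rw [hdead, add_zero]
  refine Finset.sum_nbij' (toOld k) (toNew k) ?_ ?_ ?_ ?_ ?_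
  · intro q hq; simp only [Finset.mem_filter] at hq; exact (h2 q hq.1 hq.2).2
  · intro p hp
    simp only [Finset.mem_filter]
    refine ⟨(h1 p hp).2, ?_⟩
    rw [toNew_mod k p hk]; omega
  · intro q hq; simp only [Finset.mem_filter] at hq
    exact toNew_toOld k q hk (h2 q hq.1 hq.2).1 hq.2
  · intro p hp; exact toOld_toNew k p hk (h1 p hp).1
  · intro q hq; simp only [Finset.mem_filter] at hq
    rw [toNew_toOld k q hk (h2 q hq.1 hq.2).1 hq.2]

lemma block_h1 (k a : ℕ) (hk : 2 ≤ k) :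
    ∀ p ∈ Finset.Icc (2 * a + 1) (2 * a + 1 + 2 - 1),
      1 ≤ p ∧ toNew k p ∈ Finset.Icc (a * k + 1) (a * k + 1 + k - 1) := by
  intro p hp
  simp only [Finset.mem_Icc] at *
  have hd : (p - 1) / 2 = a := by omega
  have hmo : (p - 1) % 2 = p - 1 - 2 * a := by omega
  unfold toNew
  rw [hd, hmo]
  omega

lemma block_h2 (k a : ℕ) (hk : 2 ≤ k) :
    ∀ q ∈ Finset.Icc (a * k + 1) (a * k + 1 + k - 1), (q - 1) % k < 2 →
      1 ≤ q ∧ toOld k q ∈ Finset.Icc (2 * a + 1) (2 * a + 1 + 2 - 1) := by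
  intro q hq hl
  simp only [Finset.mem_Icc] at *
  obtain ⟨t, hqt, htk⟩ : ∃ t, q - 1 = a * k + t ∧ t < k := ⟨q - 1 - a * k, by omega, by omega⟩
  have hd : (q - 1) / k = a := by
    rw [hqt, mul_comm, Nat.mul_add_div (by omega), Nat.div_eq_of_lt htk, add_zero]
  have hmo : (q - 1) % k = t := by
    rw [hqt, mul_comm, Nat.mul_add_mod, Nat.mod_eq_of_lt htk]
  have ht2 : t < 2 := hmo ▸ hl
  unfold toOld
  rw [hd, hmo]
  omega

/-- 2-D block reindexing. -/
lemma block_sum (k a b : ℕ) (hk : 2 ≤ k) (ξ' : ℕ × ℕ → ℕ)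
    (h0 : ∀ p ∈ Finset.Icc (a * k + 1) (a * k + 1 + k - 1),
          ∀ q ∈ Finset.Icc (b * k + 1) (b * k + 1 + k - 1),
          (2 ≤ (p - 1) % k ∨ 2 ≤ (q - 1) % k) → ξ' (p, q) = 0) :
    ∑ x ∈ kBlock k (a * k + 1) (b * k + 1), ξ' x
      = ∑ x ∈ kBlock 2 (2 * a + 1) (2 * b + 1), ξ' (toNew k x.1, toNew k x.2) := by
  unfold kBlock
  rw [Finset.sum_product, Finset.sum_product]
  rw [sum_live hk (Finset.Icc (2 * a + 1) (2 * a + 1 + 2 - 1))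
        (Finset.Icc (a * k + 1) (a * k + 1 + k - 1))
        (fun p => ∑ q ∈ Finset.Icc (b * k + 1) (b * k + 1 + k - 1), ξ' (p, q))
        (fun p hp hdead => Finset.sum_eq_zero fun q hq => h0 p hp q hq (Or.inl hdead))
        (block_h1 k a hk) (block_h2 k a hk)]
  refine Finset.sum_congr rfl fun p hp => ?_
  exact sum_live hk _ _ (fun q => ξ' (toNew k p, q))
    (fun q hq hdead => h0 _ ((block_h1 k a hk) p hp).2 q hq (Or.inr hdead))
    (block_h1 k b hk) (block_h2 k b hk)

lemma block_sub (k m a : ℕ) (hk : 2 ≤ k) (hm2 : m % 2 = 0) (ha : 2 * a + 1 ≤ m) :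
    ∀ q ∈ Finset.Icc (a * k + 1) (a * k + 1 + k - 1), q ∈ Finset.Icc 1 (m / 2 * k) := by
  intro q hq
  simp only [Finset.mem_Icc] at *
  have h1 : a + 1 ≤ m / 2 := by omega
  have h2 : (a + 1) * k ≤ m / 2 * k := Nat.mul_le_mul_right k h1
  constructor
  · omega
  · have : a * k + 1 + k - 1 = (a + 1) * k := by ring_nf; omega
    omega

lemma mem_kCorner {m n k : ℕ} {p : ℕ × ℕ} :
    p ∈ kCorner m n k ↔ (1 ≤ p.1 ∧ p.1 ≤ m) ∧ (1 ≤ p.2 ∧ p.2 ≤ n) ∧ p.1 % k = 1 ∧ p.2 % k = 1 := by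
  simp only [kCorner, Finset.mem_filter, Finset.mem_product, Finset.mem_Icc]
  tauto

lemma mod_one_of (k q : ℕ) (hk : 2 ≤ k) (hq : 1 ≤ q) (h : (q - 1) % k = 0) : q % k = 1 := by
  obtain ⟨d, hd⟩ := Nat.dvd_of_mod_eq_zero h
  have : q = k * d + 1 := by omega
  rw [this, Nat.mul_add_mod, Nat.mod_eq_of_lt (by omega)]

lemma mod_zero_of (k q : ℕ) (h : q % k = 1) : (q - 1) % k = 0 := by
  have h2 := Nat.div_add_mod q k
  have : q - 1 = k * (q / k) := by omega
  rw [this, Nat.mul_mod_right]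

lemma stretch_live (k : ℕ) (r : ℕ → ℕ) (q : ℕ) (h : (q - 1) % k < 2) :
    stretchSums k r q = r (toOld k q) := by
  rw [stretchSums, if_pos h]; rfl

lemma stretch_dead (k : ℕ) (r : ℕ → ℕ) (q : ℕ) (h : ¬ (q - 1) % k < 2) :
    stretchSums k r q = 0 := if_neg h

/-- The reduction from `nDR(ε)` to `nSR(k,ε)` preserves solvability: the 2×2 instance
has a solution iff the stretched `k×k` instance has one. -/
theorem ndr_to_nsr (k m n : ℕ) (hk : 2 ≤ k) (hm2 : m % 2 = 0) (hn2 : n % 2 = 0)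
    (hm : 0 < m) (hn : 0 < n)
    (r c : ℕ → ℕ) (R : Finset (ℕ × ℕ)) (hR : R ⊆ kCorner m n 2)
    (v : ℕ × ℕ → ℕ) (ε : ℕ) :
    SolvableNSR 2 m n r c R v ε ↔
    SolvableNSR k (m / 2 * k) (n / 2 * k) (stretchSums k r) (stretchSums k c)
      (R.image (fun p => ((p.1 - 1) / 2 * k + 1, (p.2 - 1) / 2 * k + 1)))
      (fun p => v (2 * ((p.1 - 1) / k) + 1, 2 * ((p.2 - 1) / k) + 1)) ε := by
  have hk0 : 0 < k := by omega
  have gh1m : ∀ p ∈ Finset.Icc 1 m, 1 ≤ p ∧ toNew k p ∈ Finset.Icc 1 (m / 2 * k) :=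
    fun p hp => ⟨(Finset.mem_Icc.mp hp).1, toNew_mem k m p hk hm2 hp⟩
  have gh2m : ∀ q ∈ Finset.Icc 1 (m / 2 * k), (q - 1) % k < 2 →
      1 ≤ q ∧ toOld k q ∈ Finset.Icc 1 m :=
    fun q hq hl => ⟨(Finset.mem_Icc.mp hq).1, toOld_mem k m q hk hm2 hq hl⟩
  have gh1n : ∀ p ∈ Finset.Icc 1 n, 1 ≤ p ∧ toNew k p ∈ Finset.Icc 1 (n / 2 * k) :=
    fun p hp => ⟨(Finset.mem_Icc.mp hp).1, toNew_mem k n p hk hn2 hp⟩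
  have gh2n : ∀ q ∈ Finset.Icc 1 (n / 2 * k), (q - 1) % k < 2 →
      1 ≤ q ∧ toOld k q ∈ Finset.Icc 1 n :=
    fun q hq hl => ⟨(Finset.mem_Icc.mp hq).1, toOld_mem k n q hk hn2 hq hl⟩
  have cfwd : ∀ p0 ∈ kCorner m n 2,
      ((p0.1 - 1) / 2 * k + 1, (p0.2 - 1) / 2 * k + 1) ∈ kCorner (m / 2 * k) (n / 2 * k) k := by
    intro p0 hp0
    obtain ⟨⟨h11, h12⟩, ⟨h21, h22⟩, ho1, ho2⟩ := mem_kCorner.mp hp0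
    have e1 : (p0.1 - 1) / 2 * k + 1 = toNew k p0.1 := by unfold toNew; omega
    have e2 : (p0.2 - 1) / 2 * k + 1 = toNew k p0.2 := by unfold toNew; omega
    have t1 := Finset.mem_Icc.mp (toNew_mem k m p0.1 hk hm2 (Finset.mem_Icc.mpr ⟨h11, h12⟩))
    have t2 := Finset.mem_Icc.mp (toNew_mem k n p0.2 hk hn2 (Finset.mem_Icc.mpr ⟨h21, h22⟩))
    have m1 : toNew k p0.1 % k = 1 := by
      apply mod_one_of k _ hk (by omega)
      rw [toNew_mod k _ hk]; omega
    have m2 : toNew k p0.2 % k = 1 := by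
      apply mod_one_of k _ hk (by omega)
      rw [toNew_mod k _ hk]; omega
    rw [mem_kCorner, e1, e2]
    exact ⟨t1, t2, m1, m2⟩
  have cbwd : ∀ p ∈ kCorner (m / 2 * k) (n / 2 * k) k,
      (toOld k p.1, toOld k p.2) ∈ kCorner m n 2 ∧
      (toOld k p.1 - 1) / 2 * k + 1 = p.1 ∧ (toOld k p.2 - 1) / 2 * k + 1 = p.2 ∧
      (p.1 - 1) % k = 0 ∧ (p.2 - 1) % k = 0 := by
    intro p hp
    obtain ⟨⟨g11, g12⟩, ⟨g21, g22⟩, gm1, gm2⟩ := mem_kCorner.mp hp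
    have l1 : (p.1 - 1) % k = 0 := mod_zero_of k p.1 gm1
    have l2 : (p.2 - 1) % k = 0 := mod_zero_of k p.2 gm2
    have o1 := Finset.mem_Icc.mp
      (toOld_mem k m p.1 hk hm2 (Finset.mem_Icc.mpr ⟨g11, g12⟩) (by omega))
    have o2 := Finset.mem_Icc.mp
      (toOld_mem k n p.2 hk hn2 (Finset.mem_Icc.mpr ⟨g21, g22⟩) (by omega))
    have d1 : toOld k p.1 = 2 * ((p.1 - 1) / k) + 1 := by unfold toOld; omega
    have d2 : toOld k p.2 = 2 * ((p.2 - 1) / k) + 1 := by unfold toOld; omega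
    have e1 : (toOld k p.1 - 1) / 2 * k + 1 = p.1 := by
      have h := toNew_toOld k p.1 hk (by omega) (by omega)
      unfold toNew at h
      have : (toOld k p.1 - 1) % 2 = 0 := by omega
      omega
    have e2 : (toOld k p.2 - 1) / 2 * k + 1 = p.2 := by
      have h := toNew_toOld k p.2 hk (by omega) (by omega)
      unfold toNew at h
      have : (toOld k p.2 - 1) % 2 = 0 := by omega
      omega
    exact ⟨mem_kCorner.mpr ⟨o1, o2, by omega, by omega⟩, e1, e2, l1, l2⟩
  have vkey : ∀ p0 : ℕ × ℕ, p0.1 % 2 = 1 → p0.2 % 2 = 1 →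
      v (2 * (((p0.1 - 1) / 2 * k + 1 - 1) / k) + 1, 2 * (((p0.2 - 1) / 2 * k + 1 - 1) / k) + 1)
        = v p0 := by
    intro p0 ho1 ho2
    have hdiv : ∀ a : ℕ, (a * k + 1 - 1) / k = a := fun a => by
      rw [Nat.add_sub_cancel, Nat.mul_div_cancel _ hk0]
    rw [hdiv, hdiv]
    exact congrArg v (Prod.ext (by omega) (by omega))
  have hnotim : ∀ p0 ∈ kCorner m n 2, p0 ∉ R →
      ((p0.1 - 1) / 2 * k + 1, (p0.2 - 1) / 2 * k + 1) ∉
        R.image (fun p => ((p.1 - 1) / 2 * k + 1, (p.2 - 1) / 2 * k + 1)) := by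
    intro p0 hp0 hnR him
    obtain ⟨p1, hp1R, he⟩ := Finset.mem_image.mp him
    obtain ⟨_, _, ho1, ho2⟩ := mem_kCorner.mp hp0
    obtain ⟨_, _, hq1, hq2⟩ := mem_kCorner.mp (hR hp1R)
    have he1 : (p1.1 - 1) / 2 * k + 1 = (p0.1 - 1) / 2 * k + 1 := congrArg Prod.fst he
    have he2 : (p1.2 - 1) / 2 * k + 1 = (p0.2 - 1) / 2 * k + 1 := congrArg Prod.snd he
    have f1 : (p1.1 - 1) / 2 = (p0.1 - 1) / 2 := Nat.eq_of_mul_eq_mul_right hk0 (by omega)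
    have f2 : (p1.2 - 1) / 2 = (p0.2 - 1) / 2 := Nat.eq_of_mul_eq_mul_right hk0 (by omega)
    have : p1 = p0 := Prod.ext (by omega) (by omega)
    exact hnR (this ▸ hp1R)
  constructor
  · rintro ⟨ξ, hb, hr, hc, hX, hN⟩
    set Ξ : ℕ × ℕ → ℕ := fun p =>
      if (p.1 - 1) % k < 2 ∧ (p.2 - 1) % k < 2 then ξ (toOld k p.1, toOld k p.2) else 0 with hΞ
    have hz : ∀ a b : ℕ, ¬((a - 1) % k < 2 ∧ (b - 1) % k < 2) → Ξ (a, b) = 0 := by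
      intro a b h
      simp only [hΞ]
      exact if_neg h
    have he : ∀ p q : ℕ, 1 ≤ p → 1 ≤ q → Ξ (toNew k p, toNew k q) = ξ (p, q) := by
      intro p q hp hq
      have m1 := toNew_mod k p hk
      have m2 := toNew_mod k q hk
      simp only [hΞ]
      rw [if_pos ⟨by omega, by omega⟩, toOld_toNew k p hk hp, toOld_toNew k q hk hq]
    have key : ∀ p0 ∈ kCorner m n 2,
        ∑ x ∈ kBlock k ((p0.1 - 1) / 2 * k + 1) ((p0.2 - 1) / 2 * k + 1), Ξ x
          = ∑ x ∈ kBlock 2 p0.1 p0.2, ξ x := by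
      intro p0 hp0
      obtain ⟨⟨h11, h12⟩, ⟨h21, h22⟩, ho1, ho2⟩ := mem_kCorner.mp hp0
      rw [block_sum k ((p0.1 - 1) / 2) ((p0.2 - 1) / 2) hk Ξ
        (fun p hp q hq hd => hz p q (by omega))]
      have e1 : 2 * ((p0.1 - 1) / 2) + 1 = p0.1 := by omega
      have e2 : 2 * ((p0.2 - 1) / 2) + 1 = p0.2 := by omega
      rw [e1, e2]
      refine Finset.sum_congr rfl fun x hx => ?_
      rw [kBlock, Finset.mem_product, Finset.mem_Icc, Finset.mem_Icc] at hx
      exact he x.1 x.2 (by omega) (by omega)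
    refine ⟨Ξ, ?_, ?_, ?_, ?_, ?_⟩
    · intro p hp
      rw [Finset.mem_product] at hp
      simp only [hΞ]
      split_ifs with h
      · exact hb _ (Finset.mem_product.mpr
          ⟨toOld_mem k m p.1 hk hm2 hp.1 h.1, toOld_mem k n p.2 hk hn2 hp.2 h.2⟩)
      · omega
    · intro q' hq'
      by_cases hl : (q' - 1) % k < 2
      · rw [stretch_live k r q' hl, ← hr (toOld k q') (toOld_mem k n q' hk hn2 hq' hl)]
        rw [sum_live hk (Finset.Icc 1 m) (Finset.Icc 1 (m / 2 * k)) (fun p => Ξ (p, q'))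
          (fun p _ hd => hz p q' (by omega)) gh1m gh2m]
        refine Finset.sum_congr rfl fun p hp => ?_
        have h1 := (gh1m p hp).1
        have hq1 : 1 ≤ q' := (Finset.mem_Icc.mp hq').1
        conv_lhs => rw [← toNew_toOld k q' hk hq1 hl]
        exact he p (toOld k q') h1 (by unfold toOld; omega)
      · rw [stretch_dead k r q' hl]
        exact Finset.sum_eq_zero fun p hp => hz p q' (by omega)
    · intro p' hp'
      by_cases hl : (p' - 1) % k < 2
      · rw [stretch_live k c p' hl, ← hc (toOld k p') (toOld_mem k m p' hk hm2 hp' hl)]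
        rw [sum_live hk (Finset.Icc 1 n) (Finset.Icc 1 (n / 2 * k)) (fun q => Ξ (p', q))
          (fun q _ hd => hz p' q (by omega)) gh1n gh2n]
        refine Finset.sum_congr rfl fun q hq => ?_
        have h1 := (gh1n q hq).1
        have hp1 : 1 ≤ p' := (Finset.mem_Icc.mp hp').1
        conv_lhs => rw [← toNew_toOld k p' hk hp1 hl]
        exact he (toOld k p') q (by unfold toOld; omega) h1
      · rw [stretch_dead k c p' hl]
        exact Finset.sum_eq_zero fun q hq => hz p' q (by omega)
    · intro p hp
      obtain ⟨p0, hp0R, hpe⟩ := Finset.mem_image.mp hp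
      subst hpe
      obtain ⟨_, _, ho1, ho2⟩ := mem_kCorner.mp (hR hp0R)
      dsimp only
      rw [key p0 (hR hp0R), vkey p0 ho1 ho2]
      exact hX p0 hp0R
    · intro p hp hnp
      obtain ⟨hc0, e1, e2, l1, l2⟩ := cbwd p hp
      have hp0R : (toOld k p.1, toOld k p.2) ∉ R := by
        intro hcon
        apply hnp
        have := Finset.mem_image_of_mem
          (fun p => ((p.1 - 1) / 2 * k + 1, (p.2 - 1) / 2 * k + 1)) hcon
        simpa [e1, e2] using this
      have hNN := hN (toOld k p.1, toOld k p.2) hc0 hp0R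
      dsimp only at hNN
      have hkey := key (toOld k p.1, toOld k p.2) hc0
      dsimp only at hkey
      rw [e1, e2] at hkey
      have hv1 : (2 * ((p.1 - 1) / k) + 1 : ℕ) = toOld k p.1 := by unfold toOld; omega
      have hv2 : (2 * ((p.2 - 1) / k) + 1 : ℕ) = toOld k p.2 := by unfold toOld; omega
      dsimp only
      rw [hv1, hv2, hkey]
      exact hNN
  · rintro ⟨ξ', hb', hr', hc', hX', hN'⟩
    have dead0 : ∀ a b : ℕ, a ∈ Finset.Icc 1 (m / 2 * k) → b ∈ Finset.Icc 1 (n / 2 * k) →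
        ¬((a - 1) % k < 2 ∧ (b - 1) % k < 2) → ξ' (a, b) = 0 := by
      intro a b ha hb0 hd
      by_cases hda : (a - 1) % k < 2
      · have hdb : ¬ (b - 1) % k < 2 := by tauto
        have h0 := hr' b hb0
        rw [stretch_dead k r b hdb] at h0
        exact Finset.sum_eq_zero_iff.mp h0 a ha
      · have h0 := hc' a ha
        rw [stretch_dead k c a hda] at h0
        exact Finset.sum_eq_zero_iff.mp h0 b hb0
    have key2 : ∀ p0 ∈ kCorner m n 2,
        ∑ x ∈ kBlock 2 p0.1 p0.2, ξ' (toNew k x.1, toNew k x.2)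
          = ∑ x ∈ kBlock k ((p0.1 - 1) / 2 * k + 1) ((p0.2 - 1) / 2 * k + 1), ξ' x := by
      intro p0 hp0
      obtain ⟨⟨h11, h12⟩, ⟨h21, h22⟩, ho1, ho2⟩ := mem_kCorner.mp hp0
      obtain ⟨a, ha⟩ : ∃ a, p0.1 = 2 * a + 1 := ⟨(p0.1 - 1) / 2, by omega⟩
      obtain ⟨b, hb2⟩ : ∃ b, p0.2 = 2 * b + 1 := ⟨(p0.2 - 1) / 2, by omega⟩
      rw [show (p0.1 - 1) / 2 = a from by omega, show (p0.2 - 1) / 2 = b from by omega, ha, hb2]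
      refine (block_sum k a b hk ξ' ?_).symm
      intro p hp q hq hd
      exact dead0 p q (block_sub k m a hk hm2 (by omega) p hp)
        (block_sub k n b hk hn2 (by omega) q hq) (by omega)
    refine ⟨fun x => ξ' (toNew k x.1, toNew k x.2), ?_, ?_, ?_, ?_, ?_⟩
    · intro p hp
      rw [Finset.mem_product] at hp
      exact hb' _ (Finset.mem_product.mpr
        ⟨toNew_mem k m p.1 hk hm2 hp.1, toNew_mem k n p.2 hk hn2 hp.2⟩)
    · intro q hq
      have h0 := hr' (toNew k q) (toNew_mem k n q hk hn2 hq)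
      rw [stretch_live k r (toNew k q) (by rw [toNew_mod k q hk]; omega),
        toOld_toNew k q hk (Finset.mem_Icc.mp hq).1] at h0
      rw [← h0]
      exact (sum_live hk (Finset.Icc 1 m) (Finset.Icc 1 (m / 2 * k))
        (fun p => ξ' (p, toNew k q))
        (fun p hp hd => dead0 p (toNew k q) hp (toNew_mem k n q hk hn2 hq) (by omega))
        gh1m gh2m).symm
    · intro p hp
      have h0 := hc' (toNew k p) (toNew_mem k m p hk hm2 hp)
      rw [stretch_live k c (toNew k p) (by rw [toNew_mod k p hk]; omega),
        toOld_toNew k p hk (Finset.mem_Icc.mp hp).1] at h0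
      rw [← h0]
      exact (sum_live hk (Finset.Icc 1 n) (Finset.Icc 1 (n / 2 * k))
        (fun q => ξ' (toNew k p, q))
        (fun q hq hd => dead0 (toNew k p) q (toNew_mem k m p hk hm2 hp) hq (by omega))
        gh1n gh2n).symm
    · intro p0 hp0R
      have hc0 := hR hp0R
      obtain ⟨_, _, ho1, ho2⟩ := mem_kCorner.mp hc0
      dsimp only
      rw [key2 p0 hc0]
      have hX'' := hX' ((p0.1 - 1) / 2 * k + 1, (p0.2 - 1) / 2 * k + 1)
        (Finset.mem_image.mpr ⟨p0, hp0R, rfl⟩)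
      dsimp only at hX''
      rw [vkey p0 ho1 ho2] at hX''
      exact hX''
    · intro p0 hp0c hp0R
      obtain ⟨_, _, ho1, ho2⟩ := mem_kCorner.mp hp0c
      have hNN := hN' ((p0.1 - 1) / 2 * k + 1, (p0.2 - 1) / 2 * k + 1)
        (cfwd p0 hp0c) (hnotim p0 hp0c hp0R)
      dsimp only at hNN
      rw [vkey p0 ho1 ho2] at hNN
      dsimp only
      rw [key2 p0 hp0c]
      exact hNN
end
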